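/- arXiv:2509.16396 — 11 statements merged into one kernel-verified Lean document; each statement's English description precedes it below -/
import Mathlib

section
/- There exists a real number κ ≥ 0 such that every maximizer x* of ∑ᵢ bᵢxᵢ over the feasible set X satisfies: (i) x*ᵢ = 1 for every index i with aᵢ ≤ 0; and (ii) for every index i with aᵢ > 0, if bᵢ > κ·aᵢ then x*ᵢ = 1, and if bᵢ < κ·aᵢ then x*ᵢ = 0. -/
open Finset

/-- The feasible set of the auxiliary fractional-knapsack problem:
`x ∈ [0,1]^K` with `∑ i, a i * x i = 0`. -/
def AuxFeasible {K : ℕ} (a : Fin K → ℝ) (x : Fin K → ℝ) : Prop :=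
  (∀ i, x i ∈ Set.Icc (0 : ℝ) 1) ∧ ∑ i, a i * x i = 0

/-- `x` maximizes `∑ i, b i * x i` over the feasible set. -/
def AuxMaximizer {K : ℕ} (a b : Fin K → ℝ) (x : Fin K → ℝ) : Prop :=
  AuxFeasible a x ∧ ∀ y : Fin K → ℝ, AuxFeasible a y → ∑ i, b i * y i ≤ ∑ i, b i * x i

/-- Sum of a function supported on two distinct points. -/
lemma aux_sum_two {K : ℕ} (c : Fin K → ℝ) (i j : Fin K) (hij : i ≠ j) (di dj : ℝ) :
    ∑ k, c k * (if k = i then di else if k = j then dj else 0) = c i * di + c j * dj := by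
  have h : ∀ k ∈ Finset.univ, c k * (if k = i then di else if k = j then dj else 0)
      = (if k = i then c i * di else 0) + (if k = j then c j * dj else 0) := by
    intro k _
    by_cases h1 : k = i
    · subst h1
      simp [hij]
    · by_cases h2 : k = j
      · subst h2; simp [h1]
      · simp [h1, h2]
  rw [Finset.sum_congr rfl h, Finset.sum_add_distrib]
  simp

/-- Two-coordinate exchange: a feasible improving perturbation contradicts maximality. -/
lemma aux_exchange {K : ℕ} (a b : Fin K → ℝ) (x : Fin K → ℝ)
    (hx : AuxMaximizer a b x) (i j : Fin K) (hij : i ≠ j) (di dj : ℝ)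
    (hca : a i * di + a j * dj = 0) (hcb : 0 < b i * di + b j * dj)
    (hi0 : 0 ≤ x i + di) (hi1 : x i + di ≤ 1)
    (hj0 : 0 ≤ x j + dj) (hj1 : x j + dj ≤ 1) : False := by
  set y : Fin K → ℝ := fun k => x k + (if k = i then di else if k = j then dj else 0) with hy
  have hsum : ∀ c : Fin K → ℝ, ∑ k, c k * y k = ∑ k, c k * x k + (c i * di + c j * dj) := by
    intro c
    have : ∀ k ∈ Finset.univ, c k * y k
        = c k * x k + c k * (if k = i then di else if k = j then dj else 0) := by
      intro k _; rw [hy]; dsimp only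
      split_ifs <;> ring
    rw [Finset.sum_congr rfl this, Finset.sum_add_distrib, aux_sum_two c i j hij]
  have hfeas : AuxFeasible a y := by
    constructor
    · intro k
      by_cases h1 : k = i
      · subst h1; simp only [hy, if_pos rfl]; exact ⟨hi0, hi1⟩
      · by_cases h2 : k = j
        · subst h2; simp only [hy, if_neg h1, if_pos rfl]; exact ⟨hj0, hj1⟩
        · simp only [hy, if_neg h1, if_neg h2, add_zero]; exact hx.1.1 k
    · rw [hsum a, hx.1.2, hca]; ring
  have hle := hx.2 y hfeas
  rw [hsum b] at hle
  linarith

/-- Every maximizer sets `x i = 1` on coordinates with `a i ≤ 0`. -/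
lemma aux_neg_one {K : ℕ} (a b : Fin K → ℝ)
    (hsum : 0 ≤ ∑ i, a i) (hb : ∀ i, 0 ≤ b i) (hab : ∀ i, 0 ≤ a i + b i)
    (hne : ∀ i, (a i, b i) ≠ (0, 0))
    (x : Fin K → ℝ) (hx : AuxMaximizer a b x) (i : Fin K) (hi : a i ≤ 0) : x i = 1 := by
  by_contra hxi
  have hxi1 : x i < 1 := lt_of_le_of_ne (hx.1.1 i).2 hxi
  rcases eq_or_lt_of_le hi with hai0 | hai
  · -- a i = 0, so b i > 0; raise x i to 1
    have hbi : b i ≠ 0 := by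
      intro h; exact hne i (by rw [hai0, h])
    have hbi' : 0 < b i := lt_of_le_of_ne (hb i) (Ne.symm hbi)
    set y : Fin K → ℝ := fun k => if k = i then 1 else x k with hy
    have hfeas : AuxFeasible a y := by
      constructor
      · intro k
        by_cases h : k = i
        · simp [hy, h]
        · simp only [hy, if_neg h]; exact hx.1.1 k
      · rw [← hx.1.2]
        apply Finset.sum_congr rfl
        intro k _
        by_cases h : k = i
        · subst h; simp only [hy, if_pos rfl]; rw [hai0]; ring
        · simp [hy, h]
    have hval : ∑ k, b k * y k = ∑ k, b k * x k + b i * (1 - x i) := by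
      have : ∀ k ∈ Finset.univ, b k * y k
          = b k * x k + (if k = i then b i * (1 - x i) else 0) := by
        intro k _
        by_cases h : k = i
        · subst h; simp [hy]; ring
        · simp [hy, h]
      rw [Finset.sum_congr rfl this, Finset.sum_add_distrib, Finset.sum_ite_eq' Finset.univ i]
      simp
    have hle := hx.2 y hfeas
    rw [hval] at hle
    nlinarith
  · -- a i < 0
    have hex : ∃ j, 0 < a j ∧ x j < 1 := by
      by_contra h
      push_neg at h
      have hlt : ∑ k, a k < ∑ k, a k * x k := by
        apply Finset.sum_lt_sum
        · intro k _
          rcases le_or_gt (a k) 0 with hk | hk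
          · nlinarith [(hx.1.1 k).2]
          · have := h k hk
            have hxk : x k = 1 := le_antisymm (hx.1.1 k).2 this
            rw [hxk]; ring_nf; exact le_refl _
        · refine ⟨i, Finset.mem_univ i, ?_⟩
          nlinarith
      rw [hx.1.2] at hlt
      linarith
    obtain ⟨j, haj, hxj⟩ := hex
    have hij : i ≠ j := by
      intro h; rw [h] at hai; linarith
    set t : ℝ := min ((1 - x i) / a j) ((1 - x j) / (-a i)) with ht
    have ht1 : 0 < (1 - x i) / a j := div_pos (by linarith) haj
    have ht2 : 0 < (1 - x j) / (-a i) := div_pos (by linarith) (by linarith)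
    have htpos : 0 < t := lt_min ht1 ht2
    have hbnd1 : t * a j ≤ 1 - x i := by
      have := min_le_left ((1 - x i) / a j) ((1 - x j) / (-a i))
      calc t * a j ≤ ((1 - x i) / a j) * a j := by
            apply mul_le_mul_of_nonneg_right (ht ▸ this) (le_of_lt haj)
        _ = 1 - x i := by field_simp
    have hbnd2 : t * (-a i) ≤ 1 - x j := by
      have := min_le_right ((1 - x i) / a j) ((1 - x j) / (-a i))
      calc t * (-a i) ≤ ((1 - x j) / (-a i)) * (-a i) := by
            apply mul_le_mul_of_nonneg_right (ht ▸ this) (by linarith)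
        _ = 1 - x j := div_mul_cancel₀ _ (ne_of_gt (show (0:ℝ) < -a i by linarith))
    have hbi : 0 < b i := by have := hab i; linarith
    apply aux_exchange a b x hx i j hij (t * a j) (t * (-a i))
    · ring
    · have h1 : 0 < b i * (t * a j) := by positivity
      have h2 : 0 ≤ b j * (t * (-a i)) := by
        apply mul_nonneg (hb j); nlinarith
      linarith
    · nlinarith [(hx.1.1 i).1]
    · linarith
    · nlinarith [(hx.1.1 j).1]
    · linarith

/-- Cross-maximizer exchange: cannot have `x i > 0` and `y j < 1` for two (possibly
different) maximizers when the ratio of `i` is strictly below that of `j`. -/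
lemma aux_cross {K : ℕ} (a b : Fin K → ℝ) (x y : Fin K → ℝ)
    (hx : AuxMaximizer a b x) (hy : AuxMaximizer a b y)
    (i j : Fin K) (hi : 0 < a i) (hj : 0 < a j)
    (hr : b i * a j < b j * a i) (hxi : 0 < x i) (hyj : y j < 1) : False := by
  have hij : i ≠ j := by
    intro h; subst h; exact absurd hr (lt_irrefl _)
  -- the midpoint is also a maximizer
  set z : Fin K → ℝ := fun k => (x k + y k) / 2 with hz
  have hvals : ∑ k, b k * x k = ∑ k, b k * y k :=
    le_antisymm (hy.2 x hx.1) (hx.2 y hy.1)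
  have hzsum : ∀ c : Fin K → ℝ, ∑ k, c k * z k = (∑ k, c k * x k + ∑ k, c k * y k) / 2 := by
    intro c
    rw [← Finset.sum_add_distrib, Finset.sum_div]
    apply Finset.sum_congr rfl
    intro k _; rw [hz]; ring
  have hzfeas : AuxFeasible a z := by
    constructor
    · intro k
      have h1 := hx.1.1 k
      have h2 := hy.1.1 k
      simp only [hz, Set.mem_Icc] at *
      constructor <;> [linarith [h1.1, h2.1]; linarith [h1.2, h2.2]]
    · rw [hzsum a, hx.1.2, hy.1.2]; ring
  have hzmax : AuxMaximizer a b z := by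
    refine ⟨hzfeas, fun w hw => ?_⟩
    have := hx.2 w hw
    rw [hzsum b, ← hvals]
    linarith
  have hzi : 0 < z i := by
    have := (hy.1.1 i).1; rw [hz]; dsimp; linarith
  have hzj : z j < 1 := by
    have := (hx.1.1 j).2; rw [hz]; dsimp; linarith
  set t : ℝ := min (z i / a j) ((1 - z j) / a i) with ht
  have ht1 : 0 < z i / a j := div_pos hzi hj
  have ht2 : 0 < (1 - z j) / a i := div_pos (by linarith) hi
  have htpos : 0 < t := lt_min ht1 ht2
  have hbnd1 : t * a j ≤ z i := by
    have := min_le_left (z i / a j) ((1 - z j) / a i)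
    calc t * a j ≤ (z i / a j) * a j :=
          mul_le_mul_of_nonneg_right (ht ▸ this) (le_of_lt hj)
      _ = z i := by field_simp
  have hbnd2 : t * a i ≤ 1 - z j := by
    have := min_le_right (z i / a j) ((1 - z j) / a i)
    calc t * a i ≤ ((1 - z j) / a i) * a i :=
          mul_le_mul_of_nonneg_right (ht ▸ this) (le_of_lt hi)
      _ = 1 - z j := by field_simp
  apply aux_exchange a b z hzmax i j hij (-(t * a j)) (t * a i)
  · ring
  · have : 0 < t * (b j * a i - b i * a j) := by
      apply mul_pos htpos; linarith
    nlinarith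
  · linarith
  · have := (hzfeas.1 i).2; nlinarith
  · have := (hzfeas.1 j).1; nlinarith
  · linarith

/-- Lemma A.1 of the paper: there is a threshold ratio `κ ≥ 0` such that every
maximizer of the auxiliary problem assigns `x i = 1` to all negative goods, and
assigns `x i = 1` (resp. `x i = 0`) to every strictly positive good whose ratio
`b i / a i` lies strictly above (resp. below) `κ`. -/
theorem auxiliary_knapsack_structure (K : ℕ) (hK : 1 ≤ K) (a b : Fin K → ℝ)
    (hsum : 0 ≤ ∑ i, a i)
    (hb : ∀ i, 0 ≤ b i)
    (hab : ∀ i, 0 ≤ a i + b i)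
    (hne : ∀ i, (a i, b i) ≠ (0, 0)) :
    ∃ κ : ℝ, 0 ≤ κ ∧
      ∀ x : Fin K → ℝ, AuxMaximizer a b x →
        (∀ i, a i ≤ 0 → x i = 1) ∧
        (∀ i, 0 < a i → (κ * a i < b i → x i = 1) ∧ (b i < κ * a i → x i = 0)) := by
  classical
  set S : Finset (Fin K) :=
    Finset.univ.filter (fun i => 0 < a i ∧ ∃ x, AuxMaximizer a b x ∧ x i < 1) with hS
  by_cases hSne : S.Nonempty
  · obtain ⟨j0, hj0S, hj0max⟩ := Finset.exists_max_image S (fun i => b i / a i) hSne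
    have hj0 : 0 < a j0 ∧ ∃ y, AuxMaximizer a b y ∧ y j0 < 1 := by
      have := hj0S; rw [hS, Finset.mem_filter] at this; exact this.2
    obtain ⟨haj0, y0, hy0, hy0j0⟩ := hj0
    refine ⟨b j0 / a j0, div_nonneg (hb j0) (le_of_lt haj0), fun x hx => ?_⟩
    refine ⟨fun i hi => aux_neg_one a b hsum hb hab hne x hx i hi, fun i hai => ?_⟩
    constructor
    · intro hlt
      by_contra hxi
      have hxi1 : x i < 1 := lt_of_le_of_ne (hx.1.1 i).2 hxi
      have hiS : i ∈ S := by
        rw [hS, Finset.mem_filter]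
        exact ⟨Finset.mem_univ i, hai, x, hx, hxi1⟩
      have := hj0max i hiS
      rw [div_le_div_iff₀ hai haj0] at this
      have : b i ≤ (b j0 / a j0) * a i := by
        rw [div_mul_eq_mul_div, le_div_iff₀ haj0]; linarith
      linarith
    · intro hlt
      by_contra hxi
      have hxi0 : 0 < x i := lt_of_le_of_ne (hx.1.1 i).1 (Ne.symm hxi)
      have hr : b i * a j0 < b j0 * a i := by
        rw [div_mul_eq_mul_div, lt_div_iff₀ haj0] at hlt
        linarith
      exact aux_cross a b x y0 hx hy0 i j0 hai haj0 hr hxi0 hy0j0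
  · refine ⟨0, le_refl 0, fun x hx => ?_⟩
    refine ⟨fun i hi => aux_neg_one a b hsum hb hab hne x hx i hi, fun i hai => ?_⟩
    constructor
    · intro _
      by_contra hxi
      have hxi1 : x i < 1 := lt_of_le_of_ne (hx.1.1 i).2 hxi
      exact hSne ⟨i, by rw [hS, Finset.mem_filter]; exact ⟨Finset.mem_univ i, hai, x, hx, hxi1⟩⟩
    · intro hlt
      have := hb i
      simp at hlt
      linarith
end

section
/- Let a > 0 and b ≥ 0. Then: (i) for all t, t' with 0 < t < t' < 1, if a·Φ(t) + b ≥ 0 then a·Φ(t') + b > 0 (strict single crossing); and (ii) the crossing point inf{ t ∈ (0,1) : a·Φ(t) + b > 0 } is strictly positive. -/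
/-- Lemma A.2 (fourth part): for `a > 0`, `b ≥ 0`, the function
`t ↦ a·Φ(t) + b` is strictly single-crossing on `(0,1)`, and its crossing point
`inf { t ∈ (0,1) : a·Φ(t) + b > 0 }` is strictly positive. -/
theorem virtual_value_single_crossing
    (f F Φ : ℝ → ℝ)
    (hfc : ContinuousOn f (Set.Icc 0 1))
    (hfpos : ∀ t ∈ Set.Ioo (0 : ℝ) 1, 0 < f t)
    (hmono : MonotoneOn f (Set.Icc 0 (1 / 2)))
    (hanti : AntitoneOn f (Set.Icc (1 / 2) 1))
    (hint : ∫ s in (0 : ℝ)..1, f s = 1)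
    (hF : ∀ t, F t = ∫ s in (0 : ℝ)..t, f s)
    (hΦ : ∀ t ∈ Set.Ioo (0 : ℝ) 1, Φ t = t - (1 - F t) / f t)
    (hf0 : f 0 = 0)
    (a b : ℝ) (ha : 0 < a) (hb : 0 ≤ b) :
    (∀ t t' : ℝ, 0 < t → t < t' → t' < 1 →
        0 ≤ a * Φ t + b → 0 < a * Φ t' + b) ∧
    0 < sInf {t : ℝ | t ∈ Set.Ioo (0 : ℝ) 1 ∧ 0 < a * Φ t + b} := by
  -- integrability on subintervals
  have hii : ∀ u v : ℝ, u ∈ Set.Icc (0:ℝ) 1 → v ∈ Set.Icc (0:ℝ) 1 →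
      IntervalIntegrable f MeasureTheory.volume u v := fun u v hu hv =>
    (hfc.mono (Set.uIcc_subset_Icc hu hv)).intervalIntegrable
  -- F v - F u = ∫ u..v
  have hFsub : ∀ u v : ℝ, 0 ≤ u → u ≤ v → v ≤ 1 →
      F v - F u = ∫ s in u..v, f s := by
    intro u v hu huv hv
    have h1 := intervalIntegral.integral_add_adjacent_intervals
      (hii 0 u ⟨le_refl 0, hu.trans (huv.trans hv)⟩ ⟨hu, huv.trans hv⟩)
      (hii u v ⟨hu, huv.trans hv⟩ ⟨hu.trans huv, hv⟩)
    rw [hF u, hF v]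
    linarith
  -- positivity of integrals on subintervals
  have hposint : ∀ u v : ℝ, 0 ≤ u → u < v → v ≤ 1 → 0 < ∫ s in u..v, f s := by
    intro u v hu huv hv
    refine intervalIntegral.intervalIntegral_pos_of_pos_on
      (hii u v ⟨hu, (huv.le.trans hv)⟩ ⟨hu.trans huv.le, hv⟩) ?_ huv
    intro x hx
    exact hfpos x ⟨lt_of_le_of_lt hu hx.1, lt_of_lt_of_le hx.2 hv⟩
  have hF1 : F 1 = 1 := by rw [hF]; exact hint
  -- 1 - F t = ∫ t..1
  have hFtail : ∀ t : ℝ, 0 ≤ t → t ≤ 1 → 1 - F t = ∫ s in t..1, f s := by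
    intro t ht ht1
    have := hFsub t 1 ht ht1 le_rfl
    rw [hF1] at this; linarith
  -- on (1/2, 1), a·Φ + b > 0
  have hΦhalf : ∀ t' : ℝ, 1/2 < t' → t' < 1 → 0 < a * Φ t' + b := by
    intro t' hhalf ht'1
    have ht'0 : (0:ℝ) < t' := by linarith
    have hft' : 0 < f t' := hfpos t' ⟨ht'0, ht'1⟩
    have hkey : 1 - F t' ≤ f t' * (1 - t') := by
      rw [hFtail t' ht'0.le ht'1.le]
      have hmon : ∫ s in t'..1, f s ≤ ∫ s in t'..1, f t' := by
        apply intervalIntegral.integral_mono_on ht'1.le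
          (hii t' 1 ⟨ht'0.le, ht'1.le⟩ ⟨zero_le_one, le_rfl⟩)
          intervalIntegrable_const
        intro x hx
        exact hanti ⟨hhalf.le, ht'1.le⟩ ⟨hhalf.le.trans hx.1, hx.2⟩ hx.1
      have hc : ∫ s in t'..1, f t' = (1 - t') * f t' := by
        simp [intervalIntegral.integral_const]
      rw [hc] at hmon; linarith [hmon]
    have hdiv : (1 - F t') / f t' ≤ 1 - t' := by
      rw [div_le_iff₀ hft']; linarith
    have hΦt' : Φ t' = t' - (1 - F t') / f t' := hΦ t' ⟨ht'0, ht'1⟩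
    have hΦpos : 0 < Φ t' := by rw [hΦt']; linarith
    nlinarith
  constructor
  · intro t t' ht htt' ht'1 h0
    rcases le_or_gt t' (1/2) with hle | hgt
    · -- monotone region
      have ht'0 : (0:ℝ) < t' := ht.trans htt'
      have hft : 0 < f t := hfpos t ⟨ht, htt'.trans ht'1⟩
      have hft' : 0 < f t' := hfpos t' ⟨ht'0, ht'1⟩
      have hmle : f t ≤ f t' :=
        hmono ⟨ht.le, htt'.le.trans hle⟩ ⟨ht'0.le, hle⟩ htt'.le
      have hFlt : F t < F t' := by
        have := hposint t t' ht.le htt' ht'1.le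
        have h2 := hFsub t t' ht.le htt'.le ht'1.le
        linarith
      have hFt'lt1 : F t' < 1 := by
        have := hposint t' 1 ht'0.le ht'1 le_rfl
        have h2 := hFtail t' ht'0.le ht'1.le
        linarith
      have hq1 : (1 - F t') / f t' ≤ (1 - F t') / f t := by
        apply div_le_div_of_nonneg_left (by linarith) hft hmle
      have hq2 : (1 - F t') / f t < (1 - F t) / f t := by
        rw [div_lt_div_iff₀ hft hft]; nlinarith
      have hΦt : Φ t = t - (1 - F t) / f t := hΦ t ⟨ht, htt'.trans ht'1⟩
      have hΦt' : Φ t' = t' - (1 - F t') / f t' := hΦ t' ⟨ht'0, ht'1⟩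
      have hΦlt : Φ t < Φ t' := by rw [hΦt, hΦt']; linarith
      nlinarith
    · exact hΦhalf t' hgt ht'1
  · -- crossing point is positive
    set S := {t : ℝ | t ∈ Set.Ioo (0 : ℝ) 1 ∧ 0 < a * Φ t + b} with hS
    have hne : S.Nonempty := ⟨3/4, ⟨by norm_num, by norm_num⟩,
      hΦhalf (3/4) (by norm_num) (by norm_num)⟩
    -- find ε from continuity at 0
    have hba : 0 ≤ b / a := div_nonneg hb ha.le
    set c : ℝ := 1 + b / a with hc
    have hc1 : 1 ≤ c := by simp [hc]; linarith
    set δ : ℝ := 1 / (2 * c) with hδ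
    have hδpos : 0 < δ := by positivity
    have hcont : ContinuousWithinAt f (Set.Icc 0 1) 0 :=
      hfc 0 ⟨le_rfl, zero_le_one⟩
    have hev : {x : ℝ | f x < δ} ∈ nhdsWithin 0 (Set.Icc (0:ℝ) 1) := by
      have htd : Filter.Tendsto f (nhdsWithin 0 (Set.Icc (0:ℝ) 1)) (nhds (f 0)) := hcont
      rw [hf0] at htd
      exact htd.eventually_lt_const hδpos
    rw [Metric.mem_nhdsWithin_iff] at hev
    obtain ⟨ε, hεpos, hεball⟩ := hev
    set ε' : ℝ := min ε (1/2) with hε'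
    have hε'pos : 0 < ε' := lt_min hεpos (by norm_num)
    have hsmall : ∀ x : ℝ, 0 ≤ x → x < ε' → f x < δ := by
      intro x hx hxε
      refine hεball ⟨?_, ?_⟩
      · rw [Metric.mem_ball, Real.dist_eq, sub_zero, abs_of_nonneg hx]
        exact lt_of_lt_of_le hxε (min_le_left _ _)
      · exact ⟨hx, by have := lt_of_lt_of_le hxε (min_le_right _ _); linarith⟩
    -- every element of S is ≥ ε'
    have hlb : ∀ t ∈ S, ε' ≤ t := by
      intro t htS
      by_contra hlt
      push_neg at hlt
      obtain ⟨⟨ht0, ht1⟩, hpos⟩ := htS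
      have hft : 0 < f t := hfpos t ⟨ht0, ht1⟩
      have hftδ : f t < δ := hsmall t ht0.le hlt
      -- F t ≤ δ * t
      have hFt : F t ≤ δ * t := by
        rw [hF t]
        have : ∫ s in (0:ℝ)..t, f s ≤ ∫ s in (0:ℝ)..t, δ := by
          apply intervalIntegral.integral_mono_on ht0.le
            (hii 0 t ⟨le_rfl, zero_le_one⟩ ⟨ht0.le, ht1.le⟩)
            intervalIntegrable_const
          intro x hx
          rcases eq_or_lt_of_le hx.1 with h | h
          · rw [← h, hf0]; exact hδpos.le
          · exact (hsmall x hx.1 (lt_of_le_of_lt hx.2 hlt)).le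
        rw [intervalIntegral.integral_const, smul_eq_mul, sub_zero, mul_comm] at this
        exact this
      have hδε : δ * t < 1/2 := by
        have ht2 : t < 1/2 := lt_of_lt_of_le hlt (min_le_right _ _)
        have hδle : δ ≤ 1/2 := by
          rw [hδ, div_le_iff₀ (by linarith : (0:ℝ) < 2 * c)]; linarith
        nlinarith
      -- f t * (t + b/a) < 1 - F t
      have hkey : f t * (t + b / a) < 1 - F t := by
        have h1 : t + b / a < c := by rw [hc]; have : 0 ≤ b / a := div_nonneg hb ha.le; linarith
        have h2 : 0 < t + b / a := by have : 0 ≤ b / a := div_nonneg hb ha.le; linarith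
        have h3 : f t * (t + b / a) < δ * c := by nlinarith
        have h4 : δ * c = 1/2 := by rw [hδ]; field_simp
        linarith
      have hdiv : t + b / a < (1 - F t) / f t := by
        rw [lt_div_iff₀ hft]; linarith [hkey]
      have hΦt : Φ t = t - (1 - F t) / f t := hΦ t ⟨ht0, ht1⟩
      have hΦlt : Φ t < -(b / a) := by rw [hΦt]; linarith
      have : a * Φ t < a * (-(b / a)) := mul_lt_mul_of_pos_left hΦlt ha
      rw [mul_neg, mul_div_cancel₀ b ha.ne'] at this
      linarith
    calc (0:ℝ) < ε' := hε'pos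
      _ ≤ sInf S := le_csInf hne hlb
end

section
/- For every a > 0 and b ≥ 0 there is a unique t* ∈ (0, 1/2] with Φ(t*) = −b/a. Moreover, if a, a' > 0 and b, b' ≥ 0 satisfy b/a > b'/a', then the corresponding solutions satisfy t* < t*', i.e., the crossing points of the goods' virtual value functions are strictly ordered by the ratios b/a. -/
/-- For each `a > 0`, `b ≥ 0` there is a unique `t* ∈ (0, 1/2]` with
`Φ(t*) = −b/a`, and these crossing points are strictly ordered by the ratios
`b/a`. -/
theorem virtual_value_crossing_points_ordered
    (f F Φ : ℝ → ℝ)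
    (hfc : ContinuousOn f (Set.Icc 0 1))
    (hfpos : ∀ t ∈ Set.Ioo (0 : ℝ) 1, 0 < f t)
    (hmono : MonotoneOn f (Set.Icc 0 (1 / 2)))
    (hanti : AntitoneOn f (Set.Icc (1 / 2) 1))
    (hint : ∫ s in (0 : ℝ)..1, f s = 1)
    (hF : ∀ t, F t = ∫ s in (0 : ℝ)..t, f s)
    (hΦ : ∀ t ∈ Set.Ioo (0 : ℝ) 1, Φ t = t - (1 - F t) / f t)
    (hf0 : f 0 = 0) :
    (∀ a b : ℝ, 0 < a → 0 ≤ b →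
        ∃! t : ℝ, t ∈ Set.Ioc (0 : ℝ) (1 / 2) ∧ Φ t = -(b / a)) ∧
    (∀ a b a' b' : ℝ, 0 < a → 0 ≤ b → 0 < a' → 0 ≤ b' → b' / a' < b / a →
        ∀ t t' : ℝ,
          t ∈ Set.Ioc (0 : ℝ) (1 / 2) → Φ t = -(b / a) →
          t' ∈ Set.Ioc (0 : ℝ) (1 / 2) → Φ t' = -(b' / a') →
          t < t') := by
  -- integrability on subintervals of [0,1]
  have hfi : ∀ s t : ℝ, s ∈ Set.Icc (0:ℝ) 1 → t ∈ Set.Icc (0:ℝ) 1 →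
      IntervalIntegrable f MeasureTheory.volume s t := by
    intro s t hs ht
    apply ContinuousOn.intervalIntegrable
    exact hfc.mono (Set.uIcc_subset_Icc hs ht)
  have h01 : (0:ℝ) ∈ Set.Icc (0:ℝ) 1 := by norm_num
  have h11 : (1:ℝ) ∈ Set.Icc (0:ℝ) 1 := by norm_num
  have hhalf1 : (1/2:ℝ) ∈ Set.Icc (0:ℝ) 1 := by norm_num
  -- F t' - F t = ∫ t..t' f  for t, t' ∈ [0,1]
  have hFadd : ∀ s t : ℝ, s ∈ Set.Icc (0:ℝ) 1 → t ∈ Set.Icc (0:ℝ) 1 →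
      F t - F s = ∫ u in s..t, f u := by
    intro s t hs ht
    rw [hF s, hF t, intervalIntegral.integral_interval_sub_left (hfi 0 t h01 ht) (hfi 0 s h01 hs)]
  -- positivity of integrals over subintervals of (0,1)
  have hposint : ∀ s t : ℝ, 0 ≤ s → s < t → t ≤ 1 → 0 < ∫ u in s..t, f u := by
    intro s t hs hst ht
    apply intervalIntegral.intervalIntegral_pos_of_pos_on
      (hfi s t ⟨hs, hst.le.trans ht⟩ ⟨hs.trans hst.le, ht⟩)
    · intro x hx
      exact hfpos x ⟨lt_of_le_of_lt hs hx.1, lt_of_lt_of_le hx.2 ht⟩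
    · exact hst
  have hF1 : F 1 = 1 := by rw [hF]; exact hint
  -- 1 - F t = ∫ t..1 f
  have h1F : ∀ t : ℝ, t ∈ Set.Icc (0:ℝ) 1 → 1 - F t = ∫ u in t..(1:ℝ), f u := by
    intro t ht
    rw [← hFadd t 1 ht h11, hF1]
  have h1Fpos : ∀ t : ℝ, t ∈ Set.Icc (0:ℝ) 1 → t < 1 → 0 < 1 - F t := by
    intro t ht ht1
    rw [h1F t ht]
    exact hposint t 1 ht.1 ht1 le_rfl
  -- F is strictly increasing on (0,1]
  have hFlt : ∀ s t : ℝ, 0 ≤ s → s < t → t ≤ 1 → F s < F t := by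
    intro s t hs hst ht
    have := hposint s t hs hst ht
    have h2 := hFadd s t ⟨hs, hst.le.trans ht⟩ ⟨hs.trans hst.le, ht⟩
    linarith [h2 ▸ this]
  -- Φ is strictly monotone on (0, 1/2]
  have hsub : Set.Ioc (0:ℝ) (1/2) ⊆ Set.Ioo (0:ℝ) 1 := by
    intro x hx; exact ⟨hx.1, lt_of_le_of_lt hx.2 (by norm_num)⟩
  have hΦmono : StrictMonoOn Φ (Set.Ioc (0:ℝ) (1/2)) := by
    intro s hs t ht hst
    rw [hΦ s (hsub hs), hΦ t (hsub ht)]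
    have hfs : 0 < f s := hfpos s (hsub hs)
    have hft : 0 < f t := hfpos t (hsub ht)
    have hfst : f s ≤ f t :=
      hmono ⟨hs.1.le, hs.2⟩ ⟨(hs.1.trans hst).le, ht.2⟩ hst.le
    have h1Ft : 0 < 1 - F t := h1Fpos t ⟨(hs.1.trans hst).le, by linarith [ht.2]⟩ (by linarith [ht.2])
    have hFst : F s < F t := hFlt s t hs.1.le hst (by linarith [ht.2])
    have hA : (1 - F t) / f t ≤ (1 - F t) / f s :=
      div_le_div_of_nonneg_left h1Ft.le hfs hfst
    have hB : (1 - F t) / f s < (1 - F s) / f s := by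
      rw [div_lt_div_iff_of_pos_right hfs]; linarith
    linarith
  -- Φ(1/2) ≥ 0
  have hfhalf : 0 < f (1/2) := hfpos _ (by norm_num)
  have hΦhalf : 0 ≤ Φ (1/2) := by
    rw [hΦ (1/2) (by norm_num)]
    have hb : 1 - F (1/2) ≤ (1/2) * f (1/2) := by
      rw [h1F (1/2) hhalf1]
      calc ∫ u in (1/2:ℝ)..1, f u ≤ ∫ u in (1/2:ℝ)..1, f (1/2) := by
              apply intervalIntegral.integral_mono_on (by norm_num)
                (hfi (1/2) 1 hhalf1 h11) (intervalIntegrable_const)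
              intro x hx
              exact hanti (by norm_num) hx hx.1
        _ = (1/2) * f (1/2) := by
              rw [intervalIntegral.integral_const, smul_eq_mul]; norm_num
    have h2 : (1 - F (1/2)) / f (1/2) ≤ 1/2 := by
      rw [div_le_iff₀ hfhalf]; linarith
    linarith
  -- continuity of Φ on compact subintervals of (0,1/2]
  have hFcont : ContinuousOn F (Set.Icc (0:ℝ) 1) := by
    have := intervalIntegral.continuousOn_primitive_interval
      (μ := MeasureTheory.volume) (f := f) (a := (0:ℝ)) (b := 1)
      (by rw [Set.uIcc_of_le (by norm_num : (0:ℝ) ≤ 1)]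
          exact hfc.integrableOn_compact isCompact_Icc)
    rw [Set.uIcc_of_le (by norm_num : (0:ℝ) ≤ 1)] at this
    exact this.congr fun t _ => hF t
  have hΦcont : ∀ t₀ : ℝ, 0 < t₀ → t₀ ≤ 1/2 → ContinuousOn Φ (Set.Icc t₀ (1/2)) := by
    intro t₀ ht₀ ht₀'
    have hsub2 : Set.Icc t₀ (1/2) ⊆ Set.Ioo (0:ℝ) 1 := by
      intro x hx; exact ⟨lt_of_lt_of_le ht₀ hx.1, lt_of_le_of_lt hx.2 (by norm_num)⟩
    have hsub3 : Set.Icc t₀ (1/2) ⊆ Set.Icc (0:ℝ) 1 := hsub2.trans Set.Ioo_subset_Icc_self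
    have : ContinuousOn (fun t => t - (1 - F t) / f t) (Set.Icc t₀ (1/2)) := by
      apply ContinuousOn.sub continuousOn_id
      apply ContinuousOn.div (continuousOn_const.sub (hFcont.mono hsub3)) (hfc.mono hsub3)
      intro x hx
      exact (hfpos x (hsub2 hx)).ne'
    exact this.congr fun t ht => hΦ t (hsub2 ht)
  -- key existence lemma
  have hexists : ∀ r : ℝ, 0 ≤ r → ∃ t ∈ Set.Ioc (0:ℝ) (1/2), Φ t = -r := by
    intro r hr
    -- find t₀ near 0 with Φ t₀ < -r
    have hc : 0 < 1 - F (1/2) := h1Fpos _ hhalf1 (by norm_num)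
    set c := 1 - F (1/2) with hcdef
    have hε : 0 < c / (r + 1) := div_pos hc (by linarith)
    have h0cont : ContinuousWithinAt f (Set.Icc (0:ℝ) 1) 0 := hfc 0 h01
    rw [ContinuousWithinAt, hf0, Metric.tendsto_nhdsWithin_nhds] at h0cont
    obtain ⟨δ, hδ, hδ'⟩ := h0cont (c / (r + 1)) hε
    set t₀ := min (δ/2) (1/4) with ht₀def
    have ht₀pos : 0 < t₀ := lt_min (by linarith) (by norm_num)
    have ht₀le : t₀ ≤ 1/4 := min_le_right _ _
    have ht₀mem : t₀ ∈ Set.Icc (0:ℝ) 1 := ⟨ht₀pos.le, by linarith⟩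
    have hft₀ : f t₀ < c / (r + 1) := by
      have := hδ' ht₀mem (by
        rw [Real.dist_eq, abs_of_nonneg (by linarith : (0:ℝ) ≤ t₀ - 0)]
        simp only [sub_zero]
        exact lt_of_le_of_lt (min_le_left _ _) (by linarith))
      rw [Real.dist_eq, sub_zero] at this
      exact lt_of_le_of_lt (le_abs_self _) this
    have hft₀pos : 0 < f t₀ := hfpos t₀ ⟨ht₀pos, by linarith⟩
    have h1Ft₀ : c ≤ 1 - F t₀ := by
      have : F t₀ < F (1/2) := hFlt t₀ (1/2) ht₀pos.le (by linarith) (by norm_num)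
      rw [hcdef]; linarith
    have hΦt₀ : Φ t₀ < -r := by
      rw [hΦ t₀ ⟨ht₀pos, by linarith⟩]
      have h1 : r + 1 < (1 - F t₀) / f t₀ := by
        rw [lt_div_iff₀ hft₀pos]
        calc (r + 1) * f t₀ < (r + 1) * (c / (r + 1)) := by
              apply mul_lt_mul_of_pos_left hft₀ (by linarith)
          _ = c := by field_simp
          _ ≤ 1 - F t₀ := h1Ft₀
      linarith
    -- IVT on [t₀, 1/2]
    have hIVT := intermediate_value_Icc (by linarith : t₀ ≤ 1/2)
      (hΦcont t₀ ht₀pos (by linarith))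
    have hmem : -r ∈ Set.Icc (Φ t₀) (Φ (1/2)) := ⟨hΦt₀.le, by linarith⟩
    obtain ⟨t, ht, hΦt⟩ := hIVT hmem
    exact ⟨t, ⟨lt_of_lt_of_le ht₀pos ht.1, ht.2⟩, hΦt⟩
  refine ⟨?_, ?_⟩
  · intro a b ha hb
    obtain ⟨t, ht, hΦt⟩ := hexists (b/a) (div_nonneg hb ha.le)
    refine ⟨t, ⟨ht, hΦt⟩, ?_⟩
    rintro t' ⟨ht', hΦt'⟩
    exact hΦmono.injOn ht' ht (by rw [hΦt, hΦt'])
  · intro a b a' b' ha hb ha' hb' hlt t t' ht hΦt ht' hΦt'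
    rw [← hΦmono.lt_iff_lt ht ht', hΦt, hΦt']
    linarith
end

section
/- Let (fₙ) be a sequence of convex functions ℝ → ℝ and f : ℝ → ℝ convex, let x ∈ ℝ and δ > 0, and suppose fₙ converges to f uniformly on [x − δ, x + δ]. Let (xₙ) be a sequence of reals with xₙ → x, and suppose f is differentiable at x with derivative d. Then D₊fₙ(xₙ) → d as n → ∞. -/
/-- The right derivative of a convex function `g : ℝ → ℝ` at `y`, as the
infimum of forward difference quotients. -/
noncomputable def rightDeriv' (g : ℝ → ℝ) (y : ℝ) : ℝ :=
  sInf {r : ℝ | ∃ z : ℝ, y < z ∧ r = (g z - g y) / (z - y)}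

lemma slope_le_rightDeriv' {g : ℝ → ℝ} (hg : ConvexOn ℝ Set.univ g)
    {w y : ℝ} (hwy : w < y) :
    (g y - g w) / (y - w) ≤ rightDeriv' g y := by
  refine le_csInf ⟨(g (y + 1) - g y) / (y + 1 - y), y + 1, by linarith, rfl⟩ ?_
  rintro r ⟨z, hz, rfl⟩
  exact hg.slope_mono_adjacent trivial trivial hwy hz

lemma rightDeriv'_le_slope {g : ℝ → ℝ} (hg : ConvexOn ℝ Set.univ g)
    {y z : ℝ} (hyz : y < z) :
    rightDeriv' g y ≤ (g z - g y) / (z - y) := by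
  refine csInf_le ⟨(g y - g (y - 1)) / (y - (y - 1)), ?_⟩ ⟨z, hyz, rfl⟩
  rintro r ⟨w, hw, rfl⟩
  exact hg.slope_mono_adjacent trivial trivial (by linarith) hw

set_option maxHeartbeats 1000000 in
/-- Convergence of subdifferentials (used in the proof of Lemma A.3, via
Attouch's theorem): if convex `fₙ → f` uniformly near `x`, `xₙ → x`, and `f`
is differentiable at `x` with derivative `d`, then `D₊fₙ(xₙ) → d`. -/
theorem rightDeriv_tendsto_of_tendstoUniformlyOn
    (fn : ℕ → ℝ → ℝ) (f : ℝ → ℝ) (x δ : ℝ) (hδ : 0 < δ)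
    (hconvn : ∀ n, ConvexOn ℝ Set.univ (fn n))
    (hconv : ConvexOn ℝ Set.univ f)
    (hunif : TendstoUniformlyOn fn f Filter.atTop (Set.Icc (x - δ) (x + δ)))
    (xn : ℕ → ℝ) (hxn : Filter.Tendsto xn Filter.atTop (nhds x))
    (d : ℝ) (hd : HasDerivAt f d x) :
    Filter.Tendsto (fun n => rightDeriv' (fn n) (xn n)) Filter.atTop (nhds d) := by
  rw [Metric.tendsto_atTop]
  intro ε hε
  have hcont : ContinuousAt f x := hd.continuousAt
  have hs := hasDerivAt_iff_tendsto_slope.mp hd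
  rw [Metric.tendsto_nhdsWithin_nhds] at hs
  obtain ⟨r, hr0, hr⟩ := hs (ε / 8) (by positivity)
  set h : ℝ := min (r / 2) δ with hhdef
  have hh0 : 0 < h := lt_min (by linarith) hδ
  have hhr : h < r := lt_of_le_of_lt (min_le_left _ _) (by linarith)
  have hhδ : h ≤ δ := min_le_right _ _
  -- slope bounds at x ± h
  have hup : f (x + h) - f x < (d + ε / 8) * h := by
    have h1 := hr (x := x + h) (by simp [hh0.ne']) (by rw [Real.dist_eq]; simp [abs_of_pos hh0, hhr])
    rw [Real.dist_eq, slope_def_field, show x + h - x = h by ring] at h1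
    have h2 := (abs_lt.mp h1).2
    have := (div_lt_iff₀ hh0).mp (show (f (x + h) - f x) / h < d + ε / 8 by linarith)
    linarith
  have hlow : (d - ε / 8) * h < f x - f (x - h) := by
    have h1 := hr (x := x - h)
      (by simp only [Set.mem_compl_iff, Set.mem_singleton_iff]; intro hc; linarith)
      (by rw [Real.dist_eq]; rw [show x - h - x = -h by ring]; simp [abs_of_pos hh0, hhr])
    rw [Real.dist_eq, slope_def_field, show (f (x - h) - f x) / (x - h - x) = (f x - f (x - h)) / h by
      rw [show x - h - x = -h by ring]; ring] at h1
    have h2 := (abs_lt.mp h1).1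
    have := (lt_div_iff₀ hh0).mp (show d - ε / 8 < (f x - f (x - h)) / h by linarith)
    linarith
  set η : ℝ := ε * h / 100 with hηdef
  have hη0 : 0 < η := by positivity
  obtain ⟨γ1, hγ10, hγ1⟩ := Metric.continuousAt_iff.mp hcont η hη0
  set γ : ℝ := min (min γ1 (h / 2)) (ε * h / (100 * (|d| + 1))) with hγdef
  have hγ0 : 0 < γ := by
    refine lt_min (lt_min hγ10 (by linarith)) (by positivity)
  have hγh : γ ≤ h / 2 := le_trans (min_le_left _ _) (min_le_right _ _)
  have hγγ1 : γ ≤ γ1 := le_trans (min_le_left _ _) (min_le_left _ _)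
  have hdγ : (|d| + 1) * γ ≤ ε * h / 100 := by
    have h1 : γ ≤ ε * h / (100 * (|d| + 1)) := min_le_right _ _
    have h2 : (0:ℝ) < |d| + 1 := by positivity
    calc (|d| + 1) * γ ≤ (|d| + 1) * (ε * h / (100 * (|d| + 1))) :=
          mul_le_mul_of_nonneg_left h1 (by positivity)
      _ = ε * h / 100 := by field_simp
  obtain ⟨N1, hN1⟩ := Filter.eventually_atTop.mp (Metric.tendstoUniformlyOn_iff.mp hunif η hη0)
  obtain ⟨N2, hN2⟩ := Metric.tendsto_atTop.mp hxn γ hγ0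
  refine ⟨max N1 N2, fun n hn => ?_⟩
  set y := xn n with hydef
  set g := fn n with hgdef
  have hyx : |y - x| < γ := by
    rw [← Real.dist_eq]; exact hN2 n (le_trans (le_max_right _ _) hn)
  have hyx1 := (abs_lt.mp hyx).1
  have hyx2 := (abs_lt.mp hyx).2
  have hmem1 : x + h ∈ Set.Icc (x - δ) (x + δ) := ⟨by linarith, by linarith⟩
  have hmem2 : x - h ∈ Set.Icc (x - δ) (x + δ) := ⟨by linarith, by linarith⟩
  have hmem3 : y ∈ Set.Icc (x - δ) (x + δ) := ⟨by linarith, by linarith⟩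
  have hA : |f (x + h) - g (x + h)| < η := by
    rw [← Real.dist_eq]; exact hN1 n (le_trans (le_max_left _ _) hn) _ hmem1
  have hB : |f (x - h) - g (x - h)| < η := by
    rw [← Real.dist_eq]; exact hN1 n (le_trans (le_max_left _ _) hn) _ hmem2
  have hC : |f y - g y| < η := by
    rw [← Real.dist_eq]; exact hN1 n (le_trans (le_max_left _ _) hn) _ hmem3
  have hD : |f y - f x| < η := by
    rw [← Real.dist_eq]; exact hγ1 (by rw [Real.dist_eq]; exact lt_of_lt_of_le hyx hγγ1)
  have hA1 := (abs_lt.mp hA).1; have hA2 := (abs_lt.mp hA).2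
  have hB1 := (abs_lt.mp hB).1; have hB2 := (abs_lt.mp hB).2
  have hC1 := (abs_lt.mp hC).1; have hC2 := (abs_lt.mp hC).2
  have hD1 := (abs_lt.mp hD).1; have hD2 := (abs_lt.mp hD).2
  -- bound on the d * (y - x) term
  have hdy : |d * (y - x)| ≤ ε * h / 100 := by
    rw [abs_mul]
    calc |d| * |y - x| ≤ (|d| + 1) * γ := by
          apply mul_le_mul (by linarith) hyx.le (abs_nonneg _) (by positivity)
      _ ≤ ε * h / 100 := hdγ
  have hdy1 := (abs_le.mp hdy).1; have hdy2 := (abs_le.mp hdy).2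
  -- upper bound
  have ht0 : (0:ℝ) < x + h - y := by linarith
  have hub : rightDeriv' g y ≤ d + ε / 3 := by
    refine le_trans (rightDeriv'_le_slope (hconvn n) (show y < x + h by linarith)) ?_
    rw [div_le_iff₀ ht0]
    have key : (ε / 3) * (h / 2) ≤ (ε / 3) * (x + h - y) := by
      apply mul_le_mul_of_nonneg_left (by linarith) (by positivity)
    linarith [key, hup, hdy1, hdy2, hA1, hA2, hC1, hC2, hD1, hD2, hηdef]
  -- lower bound
  have hs0 : (0:ℝ) < y - (x - h) := by linarith
  have hlb : d - ε / 3 ≤ rightDeriv' g y := by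
    refine le_trans ?_ (slope_le_rightDeriv' (hconvn n) (show x - h < y by linarith))
    rw [le_div_iff₀ hs0]
    have key : (ε / 3) * (h / 2) ≤ (ε / 3) * (y - (x - h)) := by
      apply mul_le_mul_of_nonneg_left (by linarith) (by positivity)
    linarith [key, hlow, hdy1, hdy2, hB1, hB2, hC1, hC2, hD1, hD2, hηdef]
  rw [Real.dist_eq, abs_lt]
  constructor <;> linarith
end

section
/- (i) q(ω) > 0 for every ω ≠ 0. (ii) If moreover ρ ≥ 0, then q(|ω|) ≤ q(ω) for every ω ∈ ℝᴷ, where |ω| denotes the vector with components |ωᵢ|; that is, replacing all components by their absolute values weakly decreases the equicorrelation quadratic form. -/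
/-- Positivity of the equicorrelation quadratic form, and the fact that under
nonnegative correlation, taking componentwise absolute values weakly
decreases it (key step in Lemma B.1). -/
theorem equicorrelation_quadratic_form
    (K : ℕ) (hK : 1 ≤ K) (ρ : ℝ) (hρ₁ : -1 < ρ) (hρ₂ : ρ < 1)
    (hρ₃ : 0 < 1 + ρ * ((K : ℝ) - 1))
    (q : (Fin K → ℝ) → ℝ)
    (hq : ∀ ω, q ω = ∑ i, ω i ^ 2 - ρ / (1 + ρ * ((K : ℝ) - 1)) * (∑ i, ω i) ^ 2) :
    (∀ ω : Fin K → ℝ, ω ≠ 0 → 0 < q ω) ∧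
    (0 ≤ ρ → ∀ ω : Fin K → ℝ, q (fun i => |ω i|) ≤ q ω) := by
  set c : ℝ := ρ / (1 + ρ * ((K : ℝ) - 1)) with hc
  constructor
  · intro ω hω
    have hsum : 0 < ∑ i, ω i ^ 2 := by
      obtain ⟨j, hj⟩ : ∃ j, ω j ≠ 0 := by
        by_contra h; push_neg at h; exact hω (funext h)
      have : 0 < ω j ^ 2 := by positivity
      exact this.trans_le (Finset.single_le_sum (f := fun i => ω i ^ 2)
        (fun i _ => sq_nonneg _) (Finset.mem_univ j))
    rw [hq]
    rcases le_or_gt ρ 0 with hρ | hρ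
    · have hcle : c ≤ 0 := div_nonpos_of_nonpos_of_nonneg hρ hρ₃.le
      nlinarith [sq_nonneg (∑ i, ω i)]
    · have hcs : (∑ i, ω i) ^ 2 ≤ (K : ℝ) * ∑ i, ω i ^ 2 := by
        have := sq_sum_le_card_mul_sum_sq (s := (Finset.univ : Finset (Fin K))) (f := ω)
        simpa using this
      have hcK : c * (K : ℝ) < 1 := by
        rw [hc, div_mul_eq_mul_div, div_lt_one hρ₃]
        nlinarith
      have hcpos : 0 < c := div_pos hρ hρ₃
      nlinarith
  · intro hρ ω
    rw [hq, hq]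
    have habs : ∀ i : Fin K, |ω i| ^ 2 = ω i ^ 2 := fun i => sq_abs _
    simp only [habs]
    have h1 : (∑ i, ω i) ^ 2 ≤ (∑ i, |ω i|) ^ 2 := by
      have := Finset.abs_sum_le_sum_abs ω (Finset.univ : Finset (Fin K))
      calc (∑ i, ω i) ^ 2 = |∑ i, ω i| ^ 2 := (sq_abs _).symm
        _ ≤ (∑ i, |ω i|) ^ 2 := by
            apply pow_le_pow_left₀ (abs_nonneg _) this
    have hcnn : 0 ≤ c := div_nonneg hρ hρ₃.le
    nlinarith
end

section
/- Suppose K ≥ 2 and ρ < 0. Let ω ∈ ℝᴷ with ωⱼ ≥ 0 for all j, and let i be an index with ωᵢ > 0 such that ωⱼ > 0 for some j ≠ i. Define ω̂ by ω̂ᵢ = −ωᵢ and ω̂ⱼ = ωⱼ for all j ≠ i. Then q(ω̂) < q(ω); that is, under negative correlation, flipping the sign of one positive component strictly decreases the equicorrelation quadratic form. -/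
/-- Under negative correlation, flipping the sign of one strictly positive
component strictly decreases the equicorrelation quadratic form (key step in
the proof of Proposition 3.3). -/
theorem equicorrelation_quadratic_form_flip_lt
    (K : ℕ) (hK : 2 ≤ K) (ρ : ℝ) (hρ₁ : -1 < ρ) (hρneg : ρ < 0)
    (hρ₃ : 0 < 1 + ρ * ((K : ℝ) - 1))
    (q : (Fin K → ℝ) → ℝ)
    (hq : ∀ ω, q ω = ∑ i, ω i ^ 2 - ρ / (1 + ρ * ((K : ℝ) - 1)) * (∑ i, ω i) ^ 2)
    (ω : Fin K → ℝ) (hω : ∀ j, 0 ≤ ω j)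
    (i : Fin K) (hi : 0 < ω i)
    (hj : ∃ j, j ≠ i ∧ 0 < ω j) :
    q (Function.update ω i (-(ω i))) < q ω := by
  obtain ⟨j, hji, hjpos⟩ := hj
  set S := ∑ k, ω k with hS
  have hlt : ω i < S := by
    refine Finset.single_lt_sum hji (Finset.mem_univ i) (Finset.mem_univ j)
      hjpos (fun k _ _ => hω k)
  have hsq : ∑ k, (Function.update ω i (-(ω i))) k ^ 2 = ∑ k, ω k ^ 2 := by
    refine Finset.sum_congr rfl fun k _ => ?_
    by_cases hk : k = i
    · subst hk; simp [Function.update_self]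
    · simp [Function.update_of_ne hk]
  have hsum : ∑ k, (Function.update ω i (-(ω i))) k = S - 2 * ω i := by
    rw [Finset.sum_update_of_mem (Finset.mem_univ i)]
    have : ∑ k ∈ Finset.univ.erase i, ω k = S - ω i := by
      rw [hS, ← Finset.add_sum_erase _ _ (Finset.mem_univ i)]; ring
    rw [Finset.sdiff_singleton_eq_erase, this]; ring
  rw [hq, hq, hsq, hsum]
  have hc : ρ / (1 + ρ * ((K : ℝ) - 1)) < 0 := div_neg_of_neg_of_pos hρneg hρ₃
  nlinarith [mul_pos hi (sub_pos.mpr hlt)]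
end

section
/- If 0 ≤ l < l' and μ{ ω : c + l·S(ω) < 0 } > 0, then g(l) < g(l'); that is, the option-value function is strictly increasing past any scale at which the kink is reached with positive probability. -/
/-!
Since `S` and `-S` have the same law,
`2 g(l) = E[(c + l S)⁺ + (c - l S)⁺] = E[c + max(c, |l| |S|)]` for `c ≥ 0`. The integrand is pointwise nondecreasing in `|l|`, and strictly increasing on the
event `c + l S < 0`, where `|l| |S| > c`.
-/

open MeasureTheory

lemma max_add_zero_add_max_sub_zero {c : ℝ} (hc : 0 ≤ c) (a : ℝ) :
    max (c + a) 0 + max (c - a) 0 = c + max c |a| := by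
  rcases abs_cases a with ⟨ha, ha'⟩ | ⟨ha, ha'⟩ <;> rw [ha] <;> simp only [max_def] <;>
    split_ifs <;> linarith

lemma integral_lt_integral_of_ae_le_of_lt_on {α : Type*} [MeasurableSpace α] {μ : Measure α}
    {f g : α → ℝ} (hf : Integrable f μ) (hg : Integrable g μ) (hle : f ≤ᵐ[μ] g)
    {s : Set α} (hs : 0 < μ s) (hlt : ∀ x ∈ s, f x < g x) :
    ∫ x, f x ∂μ < ∫ x, g x ∂μ := by
  have hnonneg : 0 ≤ᵐ[μ] g - f := by filter_upwards [hle] with x hx using sub_nonneg.2 hx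
  have hpos : 0 < ∫ x, (g - f) x ∂μ :=
    (integral_pos_iff_support_of_nonneg_ae hnonneg (hg.sub hf)).2 <|
      hs.trans_le <| measure_mono fun x hx => (sub_pos.2 (hlt x hx)).ne'
  simpa only [Pi.sub_apply, integral_sub hg hf, sub_pos] using hpos

section Symmetric

variable {Ω : Type*} [MeasurableSpace Ω] {μ : Measure Ω} [IsFiniteMeasure μ] {S : Ω → ℝ}

lemma two_mul_integral_max_add_mul_eq (hS : Integrable S μ)
    (hsym : Measure.map S μ = Measure.map (fun ω => -S ω) μ) {c : ℝ} (hc : 0 ≤ c) (l : ℝ) :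
    2 * ∫ ω, max (c + l * S ω) 0 ∂μ = ∫ ω, c + max c (|l| * |S ω|) ∂μ := by
  have hput : ∫ ω, max (c - l * S ω) 0 ∂μ = ∫ ω, max (c + l * S ω) 0 ∂μ := by
    have h := ((ProbabilityTheory.IdentDistrib.mk hS.aemeasurable hS.aemeasurable.neg hsym).comp
      (u := fun x => max (c + l * x) 0) (by fun_prop)).integral_eq
    simpa [Function.comp_def, sub_eq_add_neg] using h.symm
  have hint (m : ℝ) : Integrable (fun ω => max (c + m * S ω) 0) μ :=
    ((integrable_const c).add (hS.const_mul m)).pos_part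
  calc 2 * ∫ ω, max (c + l * S ω) 0 ∂μ
      = ∫ ω, max (c + l * S ω) 0 ∂μ + ∫ ω, max (c + -l * S ω) 0 ∂μ := by
        simp only [neg_mul, ← sub_eq_add_neg, hput, two_mul]
    _ = ∫ ω, (max (c + l * S ω) 0 + max (c - l * S ω) 0) ∂μ := by
        rw [← integral_add (hint l) (hint (-l))]
        simp only [neg_mul, ← sub_eq_add_neg]
    _ = ∫ ω, c + max c (|l| * |S ω|) ∂μ := by
        simp only [max_add_zero_add_max_sub_zero hc, abs_mul]

end Symmetric

/-- Strict monotonicity of the option-value function past any scale at which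
the kink is reached with positive probability (used in Proposition 3.3). -/
theorem option_value_strictMono
    {Ω : Type*} [MeasurableSpace Ω] (μ : Measure Ω) [IsProbabilityMeasure μ]
    (S : Ω → ℝ) (hS : Integrable S μ)
    (hsym : Measure.map S μ = Measure.map (fun ω => -S ω) μ)
    (c : ℝ) (hc : 0 ≤ c) (g : ℝ → ℝ)
    (hg : ∀ l, g l = ∫ ω, max (c + l * S ω) 0 ∂μ) :
    ∀ l l' : ℝ, 0 ≤ l → l < l' →
      0 < μ {ω | c + l * S ω < 0} → g l < g l' := by
  intro l l' hl hll' hkink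
  suffices ∫ ω, c + max c (|l| * |S ω|) ∂μ < ∫ ω, c + max c (|l'| * |S ω|) ∂μ by
    rw [hg, hg]
    linarith [two_mul_integral_max_add_mul_eq hS hsym hc l,
      two_mul_integral_max_add_mul_eq hS hsym hc l']
  have hint (m : ℝ) : Integrable (fun ω => c + max c (|m| * |S ω|)) μ :=
    (integrable_const c).add ((integrable_const c).sup (hS.abs.const_mul |m|))
  have habs : |l| < |l'| := by rwa [abs_of_nonneg hl, abs_of_nonneg (hl.trans hll'.le)]
  refine integral_lt_integral_of_ae_le_of_lt_on (hint l) (hint l')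
    (ae_of_all _ fun ω => by dsimp only; gcongr) hkink fun ω hω => ?_
  have hSneg : S ω < 0 := by nlinarith [hω.out]
  have hc_lt : c < |l| * |S ω| := by
    rw [abs_of_nonneg hl, abs_of_neg hSneg]
    linarith [hω.out]
  have hscale : |l| * |S ω| < |l'| * |S ω| := mul_lt_mul_of_pos_right habs (abs_pos.2 hSneg.ne)
  exact add_lt_add_right
    (max_lt (lt_max_of_lt_right (hc_lt.trans hscale)) (lt_max_of_lt_right hscale)) c
end

section
/- For every a ∈ ℝᴷ with a ≠ 0, letting |a| denote the componentwise absolute value of a, it holds that ∑ᵢ ∫ max(cᵢ + βᵢ(|a|)·S(ω), 0) dμ(ω) ≥ ∑ᵢ ∫ max(cᵢ + βᵢ(a)·S(ω), 0) dμ(ω); that is, replacing the weights by their componentwise absolute values weakly raises the total option value. -/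
open MeasureTheory

private lemma key_pt (c : ℝ) {t t' : ℝ} (h : |t| ≤ |t'|) :
    max (c + t) 0 + max (c - t) 0 ≤ max (c + t') 0 + max (c - t') 0 := by
  have h1 : t ≤ |t'| := (le_abs_self t).trans h
  have h2 : -t ≤ |t'| := (neg_le_abs t).trans h
  rcases abs_cases t' with ⟨he, _⟩ | ⟨he, _⟩ <;> rw [he] at h1 h2 <;>
    simp only [max_def] <;> split_ifs <;> linarith

private lemma int_mono {Ω : Type*} [MeasurableSpace Ω] (μ : Measure Ω) [IsFiniteMeasure μ]
    (S : Ω → ℝ) (hS : Integrable S μ)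
    (hsym : Measure.map S μ = Measure.map (fun ω => -S ω) μ)
    (c : ℝ) {b b' : ℝ} (hb : |b| ≤ |b'|) :
    ∫ ω, max (c + b * S ω) 0 ∂μ ≤ ∫ ω, max (c + b' * S ω) 0 ∂μ := by
  have hInt : ∀ r : ℝ, Integrable (fun ω => max (c + r * S ω) 0) μ := fun r =>
    ((integrable_const c).add (hS.const_mul r)).pos_part
  have hsymm : ∀ r : ℝ, ∫ ω, max (c + r * S ω) 0 ∂μ = ∫ ω, max (c - r * S ω) 0 ∂μ := by
    intro r
    have hf : ∀ x : ℝ, max (c + r * x) 0 = (fun x : ℝ => max (c + r * x) 0) x := fun _ => rfl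
    have hmeas : AEStronglyMeasurable (fun x : ℝ => max (c + r * x) 0)
        (Measure.map S μ) :=
      ((continuous_const.add (continuous_const.mul continuous_id)).max
        continuous_const).aestronglyMeasurable
    have hmeas2 : AEStronglyMeasurable (fun x : ℝ => max (c + r * x) 0)
        (Measure.map (fun ω => -S ω) μ) := hsym ▸ hmeas
    calc ∫ ω, max (c + r * S ω) 0 ∂μ
        = ∫ x, max (c + r * x) 0 ∂(Measure.map S μ) :=
          (integral_map hS.aemeasurable hmeas).symm
      _ = ∫ x, max (c + r * x) 0 ∂(Measure.map (fun ω => -S ω) μ) := by rw [hsym]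
      _ = ∫ ω, max (c + r * (-S ω)) 0 ∂μ :=
          integral_map hS.aemeasurable.neg hmeas2
      _ = ∫ ω, max (c - r * S ω) 0 ∂μ := by
          congr 1; ext ω; ring_nf
  have hpt : ∀ ω, max (c + b * S ω) 0 + max (c - b * S ω) 0 ≤
      max (c + b' * S ω) 0 + max (c - b' * S ω) 0 := by
    intro ω
    refine key_pt c ?_
    rw [abs_mul, abs_mul]
    exact mul_le_mul_of_nonneg_right hb (abs_nonneg _)
  have hint : ∫ ω, (max (c + b * S ω) 0 + max (c - b * S ω) 0) ∂μ ≤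
      ∫ ω, (max (c + b' * S ω) 0 + max (c - b' * S ω) 0) ∂μ := by
    refine integral_mono ?_ ?_ hpt
    · exact (hInt b).add (by simpa [sub_eq_add_neg, neg_mul] using hInt (-b))
    · exact (hInt b').add (by simpa [sub_eq_add_neg, neg_mul] using hInt (-b'))
  have e1 : ∫ ω, (max (c + b * S ω) 0 + max (c - b * S ω) 0) ∂μ =
      2 * ∫ ω, max (c + b * S ω) 0 ∂μ := by
    rw [integral_add (hInt b) (by simpa [sub_eq_add_neg, neg_mul] using hInt (-b)),
      ← hsymm b]; ring
  have e2 : ∫ ω, (max (c + b' * S ω) 0 + max (c - b' * S ω) 0) ∂μ =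
      2 * ∫ ω, max (c + b' * S ω) 0 ∂μ := by
    rw [integral_add (hInt b') (by simpa [sub_eq_add_neg, neg_mul] using hInt (-b')),
      ← hsymm b']; ring
  rw [e1, e2] at hint
  linarith

/-- Core inequality of Lemma B.1: under nonnegative common correlation,
replacing the learning weights by their componentwise absolute values weakly
raises the total option value against separate sales. -/
theorem abs_weights_raise_option_value
    (K : ℕ) (hK : 1 ≤ K) (ρ : ℝ) (hρ₀ : 0 ≤ ρ) (hρ₁ : ρ < 1)
    (σ c : Fin K → ℝ) (hσ : ∀ i, 0 < σ i)
    {Ω : Type*} [MeasurableSpace Ω] (μ : Measure Ω) [IsProbabilityMeasure μ]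
    (S : Ω → ℝ) (hS : Integrable S μ)
    (hsym : Measure.map S μ = Measure.map (fun ω => -S ω) μ)
    (q : (Fin K → ℝ) → ℝ)
    (hq : ∀ ω, q ω = ∑ i, ω i ^ 2 - ρ / (1 + ρ * ((K : ℝ) - 1)) * (∑ i, ω i) ^ 2)
    (β : (Fin K → ℝ) → Fin K → ℝ)
    (hβ : ∀ a i, β a i = a i / Real.sqrt (q fun j => a j / σ j)) :
    ∀ a : Fin K → ℝ, a ≠ 0 →
      ∑ i, ∫ ω, max (c i + β a i * S ω) 0 ∂μ ≤
        ∑ i, ∫ ω, max (c i + β (fun j => |a j|) i * S ω) 0 ∂μ := by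
  intro a ha
  -- basic facts about the denominator
  set r : ℝ := ρ / (1 + ρ * ((K : ℝ) - 1)) with hr
  have hK1 : (0:ℝ) ≤ (K : ℝ) - 1 := by
    have : (1:ℝ) ≤ (K:ℝ) := by exact_mod_cast hK
    linarith
  have hD : (0:ℝ) < 1 + ρ * ((K : ℝ) - 1) := by nlinarith
  have hr0 : 0 ≤ r := div_nonneg hρ₀ hD.le
  have hrK : r * K < 1 := by
    rw [hr, div_mul_eq_mul_div, div_lt_one hD]
    nlinarith
  -- positivity of q on nonzero vectors
  have hqpos : ∀ ω : Fin K → ℝ, ω ≠ 0 → 0 < q ω := by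
    intro ω hω
    obtain ⟨i, hi⟩ := Function.ne_iff.mp hω
    have hsum : 0 < ∑ j, ω j ^ 2 := by
      refine Finset.sum_pos' (fun j _ => sq_nonneg _) ⟨i, Finset.mem_univ i, ?_⟩
      simpa [sq_abs] using pow_pos (abs_pos.mpr hi) 2
    have hCS : (∑ j, ω j) ^ 2 ≤ (K : ℝ) * ∑ j, ω j ^ 2 := by
      have := sq_sum_le_card_mul_sum_sq (s := Finset.univ) (f := ω)
      simpa using this
    rw [hq]
    nlinarith [mul_le_mul_of_nonneg_left hCS hr0]
  set ωa : Fin K → ℝ := fun j => a j / σ j with hωa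
  set ωb : Fin K → ℝ := fun j => |a j| / σ j with hωb
  have hωa0 : ωa ≠ 0 := by
    obtain ⟨i, hi⟩ := Function.ne_iff.mp ha
    refine Function.ne_iff.mpr ⟨i, ?_⟩
    simp only [hωa]
    exact div_ne_zero hi (hσ i).ne'
  have hωb0 : ωb ≠ 0 := by
    obtain ⟨i, hi⟩ := Function.ne_iff.mp ha
    refine Function.ne_iff.mpr ⟨i, ?_⟩
    simp only [hωb]
    exact div_ne_zero (abs_ne_zero.mpr hi) (hσ i).ne'
  -- q ωb ≤ q ωa
  have hqle : q ωb ≤ q ωa := by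
    rw [hq, hq]
    have h1 : ∀ j, ωb j ^ 2 = ωa j ^ 2 := by
      intro j; simp only [hωa, hωb, div_pow]
      rw [sq_abs]
    have h2 : (∑ j, ωa j) ^ 2 ≤ (∑ j, ωb j) ^ 2 := by
      have hnb : 0 ≤ ∑ j, ωb j :=
        Finset.sum_nonneg fun j _ => div_nonneg (abs_nonneg _) (hσ j).le
      have habs : |∑ j, ωa j| ≤ ∑ j, ωb j := by
        calc |∑ j, ωa j| ≤ ∑ j, |ωa j| := Finset.abs_sum_le_sum_abs _ _
          _ = ∑ j, ωb j := by
              refine Finset.sum_congr rfl fun j _ => ?_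
              simp only [hωa, hωb, abs_div, abs_of_pos (hσ j)]
      calc (∑ j, ωa j) ^ 2 = |∑ j, ωa j| ^ 2 := (sq_abs _).symm
        _ ≤ (∑ j, ωb j) ^ 2 := by
            exact pow_le_pow_left₀ (abs_nonneg _) habs 2
    rw [Finset.sum_congr rfl fun j _ => h1 j]
    have := mul_le_mul_of_nonneg_left h2 hr0
    linarith
  have hqa : 0 < q ωa := hqpos _ hωa0
  have hqb : 0 < q ωb := hqpos _ hωb0
  have hsa : 0 < Real.sqrt (q ωa) := Real.sqrt_pos.mpr hqa
  have hsb : 0 < Real.sqrt (q ωb) := Real.sqrt_pos.mpr hqb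
  have hsle : Real.sqrt (q ωb) ≤ Real.sqrt (q ωa) := Real.sqrt_le_sqrt hqle
  -- componentwise: |β a i| ≤ |β |a| i|
  refine Finset.sum_le_sum fun i _ => ?_
  refine int_mono μ S hS hsym (c i) ?_
  rw [hβ, hβ]
  have e1 : (fun j => a j / σ j) = ωa := rfl
  have e2 : (fun j => |a j| / σ j) = ωb := rfl
  rw [e1, e2, abs_div, abs_div, abs_of_pos hsa, abs_of_pos hsb, abs_abs]
  exact div_le_div_of_nonneg_left (abs_nonneg _) hsb hsle
end

section
/- Let E be a real inner product space, u ∈ E with ‖u‖ = 1, and 0 ≤ m < 2. Let w₁, …, wₙ ∈ E be unit vectors with ⟨wᵢ, u⟩ ≥ 1 − m/2 for every i, and let c₁, …, cₙ be nonnegative reals, not all zero. Set a := ∑ᵢ cᵢ·wᵢ. Then a ≠ 0 and ‖ a/‖a‖ − u ‖² ≤ m; that is, every normalized nonnegative combination of unit vectors close to u remains close to u. -/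
open RealInnerProductSpace

/-- Cone lemma (geometric step in the proof of Lemma B.2): every normalized
nonnegative combination of unit vectors close to a unit vector `u` remains
close to `u`. -/
theorem normalized_nonneg_combination_close
    {E : Type*} [NormedAddCommGroup E] [InnerProductSpace ℝ E]
    (u : E) (hu : ‖u‖ = 1) (m : ℝ) (hm₀ : 0 ≤ m) (hm₂ : m < 2)
    (n : ℕ) (w : Fin n → E) (hw : ∀ i, ‖w i‖ = 1)
    (hwu : ∀ i, 1 - m / 2 ≤ ⟪w i, u⟫)
    (c : Fin n → ℝ) (hc : ∀ i, 0 ≤ c i) (hcne : ∃ i, c i ≠ 0) :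
    (∑ i, c i • w i) ≠ 0 ∧
      ‖(‖∑ i, c i • w i‖⁻¹ • ∑ i, c i • w i) - u‖ ^ 2 ≤ m := by
  set a : E := ∑ i, c i • w i with ha
  have hmhalf : 0 < 1 - m / 2 := by linarith
  have hcsum : 0 < ∑ i, c i := by
    obtain ⟨i, hi⟩ := hcne
    exact Finset.sum_pos' (fun j _ => hc j) ⟨i, Finset.mem_univ i, lt_of_le_of_ne (hc i) (Ne.symm hi)⟩
  have hinner : (1 - m / 2) * ∑ i, c i ≤ ⟪a, u⟫ := by
    rw [ha, sum_inner, Finset.mul_sum]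
    apply Finset.sum_le_sum
    intro i _
    rw [real_inner_smul_left]
    rw [mul_comm]
    exact mul_le_mul_of_nonneg_left (hwu i) (hc i)
  have hau : 0 < ⟪a, u⟫ := lt_of_lt_of_le (by positivity) hinner
  have hane : a ≠ 0 := by
    intro h
    rw [h, inner_zero_left] at hau
    exact lt_irrefl 0 hau
  have hna : 0 < ‖a‖ := norm_pos_iff.mpr hane
  have hnorm_le : ‖a‖ ≤ ∑ i, c i := by
    calc ‖a‖ ≤ ∑ i, ‖c i • w i‖ := norm_sum_le _ _
    _ = ∑ i, c i := by
        apply Finset.sum_congr rfl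
        intro i _
        rw [norm_smul, hw i, mul_one, Real.norm_eq_abs, abs_of_nonneg (hc i)]
  refine ⟨hane, ?_⟩
  have hunit : ‖‖a‖⁻¹ • a‖ = 1 := by
    rw [norm_smul, Real.norm_eq_abs, abs_of_nonneg (inv_nonneg.mpr hna.le),
      inv_mul_cancel₀ hna.ne']
  have hexp : ‖(‖a‖⁻¹ • a) - u‖ ^ 2 = 2 - 2 * (‖a‖⁻¹ * ⟪a, u⟫) := by
    rw [norm_sub_sq_real, hunit, hu, real_inner_smul_left]
    ring
  rw [hexp]
  have key : 1 - m / 2 ≤ ‖a‖⁻¹ * ⟪a, u⟫ := by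
    have h1 : (1 - m / 2) * ‖a‖ ≤ (1 - m / 2) * ∑ i, c i :=
      mul_le_mul_of_nonneg_left hnorm_le hmhalf.le
    have h2 : (1 - m / 2) * ‖a‖ ≤ ⟪a, u⟫ := h1.trans hinner
    rw [mul_comm, ← div_eq_mul_inv, le_div_iff₀ hna]
    exact h2
  linarith
end

section
/- There exists a unique p* ∈ [v̲, v̄] maximizing the revenue function R(p) := p·(1 − F(p)) over [v̲, v̄], and this unique maximizer satisfies p* ≤ ∫_{v̲}^{v̄} x·f(x) dx, the mean of the distribution (which by symmetry equals (v̲ + v̄)/2). -/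
open MeasureTheory

set_option maxHeartbeats 1000000

/-- Lemma A.13: against a symmetric unimodal value distribution supported on
nonnegative values, the monopoly price is unique and lies weakly below the
mean of the distribution. -/
theorem monopoly_price_unique_below_mean
    (vl vh : ℝ) (h₀ : 0 ≤ vl) (hlt : vl < vh)
    (f F : ℝ → ℝ)
    (hfc : ContinuousOn f (Set.Icc vl vh))
    (hfpos : ∀ x ∈ Set.Ioo vl vh, 0 < f x)
    (hint : ∫ x in vl..vh, f x = 1)
    (hmono : MonotoneOn f (Set.Icc vl ((vl + vh) / 2)))
    (hanti : AntitoneOn f (Set.Icc ((vl + vh) / 2) vh))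
    (hsym : ∀ x ∈ Set.Icc (0 : ℝ) ((vh - vl) / 2),
        f ((vl + vh) / 2 + x) = f ((vl + vh) / 2 - x))
    (hF : ∀ p, F p = ∫ x in vl..p, f x) :
    (∃! p : ℝ, p ∈ Set.Icc vl vh ∧
        ∀ q ∈ Set.Icc vl vh, q * (1 - F q) ≤ p * (1 - F p)) ∧
    (∀ p : ℝ, p ∈ Set.Icc vl vh →
        (∀ q ∈ Set.Icc vl vh, q * (1 - F q) ≤ p * (1 - F p)) →
        p ≤ ∫ x in vl..vh, x * f x) := by
  set m : ℝ := (vl + vh) / 2 with hmdef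
  have hvlm : vl < m := by simp only [hmdef]; linarith
  have hmvh : m < vh := by simp only [hmdef]; linarith
  have hm0 : 0 < m := lt_of_le_of_lt h₀ hvlm
  -- interval integrability on subintervals
  have hII : ∀ a b : ℝ, a ∈ Set.Icc vl vh → b ∈ Set.Icc vl vh →
      IntervalIntegrable f volume a b := fun a b ha hb =>
    (hfc.mono (Set.uIcc_subset_Icc ha hb)).intervalIntegrable
  -- nonnegativity of f on the closed interval
  have hf0 : ∀ x ∈ Set.Icc vl vh, 0 ≤ f x := by
    intro x hx
    rcases eq_or_lt_of_le hx.1 with h1 | h1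
    · -- x = vl
      have ht : Filter.Tendsto f (nhdsWithin vl (Set.Ioo vl vh)) (nhds (f vl)) :=
        (hfc vl (Set.left_mem_Icc.2 hlt.le)).mono_left
          (nhdsWithin_mono _ Set.Ioo_subset_Icc_self)
      have hne : (nhdsWithin vl (Set.Ioo vl vh)).NeBot := by
        rw [nhdsWithin_Ioo_eq_nhdsGT hlt]
        infer_instance
      have : 0 ≤ f vl :=
        ge_of_tendsto ht (Filter.eventually_iff_exists_mem.2
          ⟨Set.Ioo vl vh, self_mem_nhdsWithin, fun y hy => (hfpos y hy).le⟩)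
      rwa [← h1]
    · rcases eq_or_lt_of_le hx.2 with h2 | h2
      · have ht : Filter.Tendsto f (nhdsWithin vh (Set.Ioo vl vh)) (nhds (f vh)) :=
          (hfc vh (Set.right_mem_Icc.2 hlt.le)).mono_left
            (nhdsWithin_mono _ Set.Ioo_subset_Icc_self)
        have hne : (nhdsWithin vh (Set.Ioo vl vh)).NeBot := by
          rw [nhdsWithin_Ioo_eq_nhdsLT hlt]
          infer_instance
        have : 0 ≤ f vh :=
          ge_of_tendsto ht (Filter.eventually_iff_exists_mem.2
            ⟨Set.Ioo vl vh, self_mem_nhdsWithin, fun y hy => (hfpos y hy).le⟩)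
        rw [h2]; exact this
      · exact (hfpos x ⟨h1, h2⟩).le
  -- symmetry in two-sided form
  have hsym2 : ∀ x ∈ Set.Icc vl vh, f (vl + vh - x) = f x := by
    intro x hx
    rcases le_total x m with hxm | hxm
    · have ht : m - x ∈ Set.Icc (0:ℝ) ((vh - vl)/2) := by
        constructor <;> [linarith [hxm]; skip]
        simp only [hmdef] at hxm ⊢; linarith [hx.1]
      have := hsym (m - x) ht
      have e1 : m + (m - x) = vl + vh - x := by simp only [hmdef]; ring
      have e2 : m - (m - x) = x := by ring
      rw [e1, e2] at this; exact this
    · have ht : x - m ∈ Set.Icc (0:ℝ) ((vh - vl)/2) := by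
        constructor <;> [linarith [hxm]; skip]
        simp only [hmdef] at hxm ⊢; linarith [hx.2]
      have := hsym (x - m) ht
      have e1 : m + (x - m) = x := by ring
      have e2 : m - (x - m) = vl + vh - x := by simp only [hmdef]; ring
      rw [e1, e2] at this; exact this.symm
  have hm_mem : m ∈ Set.Icc vl vh := ⟨hvlm.le, hmvh.le⟩
  have hvl_mem : vl ∈ Set.Icc vl vh := Set.left_mem_Icc.2 hlt.le
  have hvh_mem : vh ∈ Set.Icc vl vh := Set.right_mem_Icc.2 hlt.le
  -- the two halves
  have hhalfeq : (∫ x in m..vh, f x) = ∫ x in vl..m, f x := by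
    have t := intervalIntegral.integral_comp_sub_left (a := vl) (b := m) f (vl + vh)
    have e1 : vl + vh - m = m := by simp only [hmdef]; ring
    have e2 : vl + vh - vl = vh := by ring
    rw [e1, e2] at t
    rw [← t]
    apply intervalIntegral.integral_congr
    intro x hx
    rw [Set.uIcc_of_le hvlm.le] at hx
    exact hsym2 x ⟨hx.1, le_trans hx.2 hmvh.le⟩
  have hsplit : (∫ x in vl..m, f x) + (∫ x in m..vh, f x) = 1 := by
    rw [intervalIntegral.integral_add_adjacent_intervals
      (hII vl m hvl_mem hm_mem) (hII m vh hm_mem hvh_mem), hint]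
  have hhalf : (∫ x in vl..m, f x) = 1/2 := by linarith
  have hhalf' : (∫ x in m..vh, f x) = 1/2 := by linarith
  have hFm : F m = 1/2 := by rw [hF]; exact hhalf
  have hFsplit : ∀ p ∈ Set.Icc vl vh, F p + (∫ x in p..vh, f x) = 1 := by
    intro p hp
    rw [hF, intervalIntegral.integral_add_adjacent_intervals
      (hII vl p hvl_mem hp) (hII p vh hp hvh_mem), hint]
  -- continuity of revenue
  have hFeq : F = fun p => ∫ x in vl..p, f x := funext hF
  have hFc : ContinuousOn F (Set.Icc vl vh) := by
    rw [hFeq]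
    have h := intervalIntegral.continuousOn_primitive_interval (a := vl) (b := vh)
      (μ := volume) (f := f) (by rw [Set.uIcc_of_le hlt.le]; exact hfc.integrableOn_Icc)
    rwa [Set.uIcc_of_le hlt.le] at h
  have hRc : ContinuousOn (fun p => p * (1 - F p)) (Set.Icc vl vh) :=
    (continuousOn_id.mul (continuousOn_const.sub hFc))
  -- existence of a maximizer
  obtain ⟨p₀, hp₀, hp₀max⟩ := isCompact_Icc.exists_isMaxOn (Set.nonempty_Icc.2 hlt.le) hRc
  have hp₀max' : ∀ q ∈ Set.Icc vl vh, q * (1 - F q) ≤ p₀ * (1 - F p₀) := fun q hq => hp₀max hq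
  -- Key: revenue above the mean is strictly below revenue at the mean
  have hK : ∀ p, m < p → p ≤ vh → p * (1 - F p) < m * (1 - F m) := by
    intro p hmp hpvh
    have hRm : m * (1 - F m) = m / 2 := by rw [hFm]; ring
    rcases eq_or_lt_of_le hpvh with hp | hp
    · subst hp
      have hFvh : F p = 1 := by rw [hF]; exact hint
      rw [hFvh, hRm]; simp; linarith
    · have hp_mem : p ∈ Set.Icc vl vh := ⟨le_trans hvlm.le (le_of_lt hmp), hpvh⟩
      have hfp : 0 < f p := hfpos p ⟨lt_trans hvlm hmp, hp⟩
      set A : ℝ := ∫ x in m..p, f x with hA_def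
      set B : ℝ := ∫ x in p..vh, f x with hB_def
      have hA : (p - m) * f p ≤ A := by
        have h := intervalIntegral.integral_mono_on (a := m) (b := p)
          (μ := volume) (f := fun _ => f p) (g := f) hmp.le
          intervalIntegrable_const (hII m p hm_mem hp_mem)
          (fun x hx => hanti ⟨hx.1, le_trans hx.2 hpvh⟩ ⟨hmp.le, hpvh⟩ hx.2)
        simpa [smul_eq_mul, mul_comm] using h
      have hB : B ≤ (vh - p) * f p := by
        have h := intervalIntegral.integral_mono_on (a := p) (b := vh)
          (μ := volume) (f := f) (g := fun _ => f p) hpvh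
          (hII p vh hp_mem hvh_mem) intervalIntegrable_const
          (fun x hx => hanti ⟨hmp.le, hpvh⟩ ⟨le_trans hmp.le hx.1, hx.2⟩ hx.1)
        simpa [smul_eq_mul, mul_comm] using h
      have hB0 : 0 ≤ B :=
        intervalIntegral.integral_nonneg hpvh
          (fun x hx => hf0 x ⟨le_trans hp_mem.1 hx.1, hx.2⟩)
      have hABsum : A + B = 1/2 := by
        rw [hA_def, hB_def, intervalIntegral.integral_add_adjacent_intervals
          (hII m p hm_mem hp_mem) (hII p vh hp_mem hvh_mem)]
        exact hhalf'
      have h1mFp : 1 - F p = B := by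
        have := hFsplit p hp_mem; linarith
      rw [h1mFp, hRm]
      -- from hA, hB: B * (vh - m) ≤ (vh - p)/2 ; then p*B < m/2
      have e1 : B * (p - m) ≤ ((vh - p) * f p) * (p - m) :=
        mul_le_mul_of_nonneg_right hB (by linarith)
      have e2 : (vh - p) * ((p - m) * f p) ≤ (vh - p) * A :=
        mul_le_mul_of_nonneg_left hA (by linarith)
      have e3 : B * (vh - m) ≤ (vh - p) / 2 := by nlinarith [e1, e2, hABsum]
      have e4 : p * (B * (vh - m)) ≤ p * ((vh - p) / 2) :=
        mul_le_mul_of_nonneg_left e3 (by linarith)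
      have hfac : 0 < (p - m) * (p + m - vh) :=
        mul_pos (by linarith) (by linarith)
      have e5 : p * (vh - p) < m * (vh - m) := by nlinarith [hfac]
      have e6 : (p * B) * (vh - m) < (m / 2) * (vh - m) := by nlinarith [e4, e5]
      exact lt_of_mul_lt_mul_right e6 (by linarith)
  -- every maximizer is ≤ m
  have hle_m : ∀ p ∈ Set.Icc vl vh,
      (∀ q ∈ Set.Icc vl vh, q * (1 - F q) ≤ p * (1 - F p)) → p ≤ m := by
    intro p hp hpmax
    by_contra hc
    push_neg at hc
    exact absurd (hpmax m hm_mem) (not_le.2 (hK p hc hp.2))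
  -- uniqueness: no two distinct maximizers
  have hU : ∀ p q, p ∈ Set.Icc vl vh → q ∈ Set.Icc vl vh →
      (∀ x ∈ Set.Icc vl vh, x * (1 - F x) ≤ p * (1 - F p)) →
      (∀ x ∈ Set.Icc vl vh, x * (1 - F x) ≤ q * (1 - F q)) →
      p < q → False := by
    intro p q hp hq hpmax hqmax hpq
    have hpm : p ≤ m := hle_m p hp hpmax
    have hqm : q ≤ m := hle_m q hq hqmax
    set r : ℝ := (p + q) / 2 with hr_def
    have hpr : p < r := by simp only [hr_def]; linarith
    have hrq : r < q := by simp only [hr_def]; linarith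
    have hr_mem : r ∈ Set.Icc vl vh :=
      ⟨le_trans hp.1 hpr.le, le_trans hrq.le (le_trans hqm hmvh.le)⟩
    have hfr : 0 < f r :=
      hfpos r ⟨lt_of_le_of_lt hp.1 hpr, lt_of_lt_of_le hrq (lt_of_le_of_lt hqm hmvh).le⟩
    have hp0 : (0:ℝ) ≤ p := le_trans h₀ hp.1
    have hq0 : (0:ℝ) ≤ q := le_trans h₀ hq.1
    -- F r - F p = ∫ p..r f ≤ (r-p) f r
    have hFrp : F r - F p = ∫ x in p..r, f x := by
      rw [hF, hF, ← intervalIntegral.integral_add_adjacent_intervals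
        (hII vl p hvl_mem hp) (hII p r hp hr_mem)]
      ring
    have hFqr : F q - F r = ∫ x in r..q, f x := by
      rw [hF, hF, ← intervalIntegral.integral_add_adjacent_intervals
        (hII vl r hvl_mem hr_mem) (hII r q hr_mem hq)]
      ring
    have c1 : F r - F p ≤ (r - p) * f r := by
      rw [hFrp]
      have h := intervalIntegral.integral_mono_on (a := p) (b := r)
        (μ := volume) (f := f) (g := fun _ => f r) hpr.le
        (hII p r hp hr_mem) intervalIntegrable_const
        (fun x hx => hmono ⟨le_trans hp.1 hx.1, le_trans hx.2 (le_trans hrq.le hqm)⟩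
          ⟨hr_mem.1, le_trans hrq.le hqm⟩ hx.2)
      simpa [smul_eq_mul, mul_comm] using h
    have c2 : (q - r) * f r ≤ F q - F r := by
      rw [hFqr]
      have h := intervalIntegral.integral_mono_on (a := r) (b := q)
        (μ := volume) (f := fun _ => f r) (g := f) hrq.le
        intervalIntegrable_const (hII r q hr_mem hq)
        (fun x hx => hmono ⟨hr_mem.1, le_trans hrq.le hqm⟩
          ⟨le_trans hr_mem.1 hx.1, le_trans hx.2 hqm⟩ hx.1)
      simpa [smul_eq_mul, mul_comm] using h
    have M1 : r * (1 - F r) ≤ p * (1 - F p) := hpmax r hr_mem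
    have M2 : r * (1 - F r) ≤ q * (1 - F q) := hqmax r hr_mem
    have d1 : p * (F r - F p) ≤ p * ((r - p) * f r) := mul_le_mul_of_nonneg_left c1 hp0
    have d2 : q * ((q - r) * f r) ≤ q * (F q - F r) := mul_le_mul_of_nonneg_left c2 hq0
    have key1 : (r - p) * (1 - F r) ≤ (r - p) * (p * f r) := by nlinarith [M1, d1]
    have e1 : 1 - F r ≤ p * f r := le_of_mul_le_mul_left key1 (by linarith)
    have key2 : (q - r) * (q * f r) ≤ (q - r) * (1 - F r) := by nlinarith [M2, d2]
    have e2 : q * f r ≤ 1 - F r := le_of_mul_le_mul_left key2 (by linarith)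
    have hprod : 0 < (q - p) * f r := mul_pos (by linarith) hfr
    nlinarith [e1, e2, hprod]
  -- mean equals m
  have hmean : (∫ x in vl..vh, x * f x) = m := by
    have hgc : ContinuousOn (fun x => (x - m) * f x) (Set.Icc vl vh) :=
      ((continuousOn_id.sub continuousOn_const).mul hfc)
    have hgII : ∀ a b : ℝ, a ∈ Set.Icc vl vh → b ∈ Set.Icc vl vh →
        IntervalIntegrable (fun x => (x - m) * f x) volume a b := fun a b ha hb =>
      (hgc.mono (Set.uIcc_subset_Icc ha hb)).intervalIntegrable
    have hI2 : (∫ x in m..vh, (x - m) * f x) = -(∫ x in vl..m, (x - m) * f x) := by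
      have t := intervalIntegral.integral_comp_sub_left (a := vl) (b := m)
        (fun y => (y - m) * f y) (vl + vh)
      have e1 : vl + vh - m = m := by simp only [hmdef]; ring
      have e2 : vl + vh - vl = vh := by ring
      rw [e1, e2] at t
      rw [← t]
      have : (∫ x in vl..m, (vl + vh - x - m) * f (vl + vh - x))
          = ∫ x in vl..m, -((x - m) * f x) := by
        apply intervalIntegral.integral_congr
        intro x hx
        rw [Set.uIcc_of_le hvlm.le] at hx
        have hx' : x ∈ Set.Icc vl vh := ⟨hx.1, le_trans hx.2 hmvh.le⟩
        have e3 : vl + vh - x - m = m - x := by simp only [hmdef]; ring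
        show (vl + vh - x - m) * f (vl + vh - x) = -((x - m) * f x)
        rw [e3, hsym2 x hx']
        ring
      rw [this, intervalIntegral.integral_neg]
    have hzero : (∫ x in vl..vh, (x - m) * f x) = 0 := by
      rw [← intervalIntegral.integral_add_adjacent_intervals
        (hgII vl m hvl_mem hm_mem) (hgII m vh hm_mem hvh_mem), hI2]
      ring
    have hdecomp : (∫ x in vl..vh, x * f x)
        = (∫ x in vl..vh, (x - m) * f x) + ∫ x in vl..vh, m * f x := by
      rw [← intervalIntegral.integral_add (hgII vl vh hvl_mem hvh_mem)
        ((hII vl vh hvl_mem hvh_mem).const_mul m)]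
      apply intervalIntegral.integral_congr
      intro x _
      ring
    rw [hdecomp, hzero, intervalIntegral.integral_const_mul, hint]
    ring
  refine ⟨⟨p₀, ⟨hp₀, hp₀max'⟩, ?_⟩, ?_⟩
  · rintro y ⟨hy, hymax⟩
    rcases lt_trichotomy y p₀ with h | h | h
    · exact absurd (hU y p₀ hy hp₀ hymax hp₀max' h) (fun h => h)
    · exact h
    · exact absurd (hU p₀ y hp₀ hy hp₀max' hymax h) (fun h => h)
  · intro p hp hpmax
    rw [hmean]
    exact hle_m p hp hpmax
end

section
/- Let (Ω, μ) be a probability space and X : Ω → ℝ measurable with a ≤ X(ω) ≤ b for μ-almost every ω, where a ≤ b are reals. Let c ≤ c' be reals with a + c > 0. Then Var(log(X + c')) ≤ Var(log(X + c)), where for a random variable Y, Var Y := ∫ Y² dμ − (∫ Y dμ)². -/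
open MeasureTheory

lemma log_shift_lipschitz (d : ℝ) (hd : 0 ≤ d) {x y : ℝ} (hx : 0 < x) (hy : 0 < y) :
    |Real.log (x + d) - Real.log (y + d)| ≤ |Real.log x - Real.log y| := by
  wlog h : y ≤ x generalizing x y
  · rw [abs_sub_comm, abs_sub_comm (Real.log x)]
    exact this hy hx (le_of_not_ge h)
  have hyd : 0 < y + d := by linarith
  have hxd : 0 < x + d := by linarith
  have h1 : Real.log (y + d) ≤ Real.log (x + d) := Real.log_le_log hyd (by linarith)
  have h2 : Real.log y ≤ Real.log x := Real.log_le_log hy h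
  rw [abs_of_nonneg (by linarith), abs_of_nonneg (by linarith),
      ← Real.log_div (by positivity) (by positivity),
      ← Real.log_div (by positivity) (by positivity)]
  apply Real.log_le_log (by positivity)
  rw [div_le_div_iff₀ hyd hy]
  nlinarith

lemma integrable_of_ae_bdd {Ω : Type*} [MeasurableSpace Ω] (μ : Measure Ω)
    [IsProbabilityMeasure μ] {f : Ω → ℝ} (hf : AEStronglyMeasurable f μ) {l u : ℝ}
    (h : ∀ᵐ ω ∂μ, l ≤ f ω ∧ f ω ≤ u) : Integrable f μ := by
  apply Integrable.mono' (integrable_const (max |l| |u|)) hf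
  filter_upwards [h] with ω hω
  rw [Real.norm_eq_abs]
  refine abs_le.mpr ⟨?_, ?_⟩
  · calc -(max |l| |u|) ≤ -|l| := by simp [le_max_left]
    _ ≤ l := neg_abs_le l
    _ ≤ f ω := hω.1
  · calc f ω ≤ u := hω.2
    _ ≤ |u| := le_abs_self u
    _ ≤ max |l| |u| := le_max_right _ _

/-- Key step in Proposition 2: shifting a positive bounded random variable
further away from zero weakly decreases the variance of its logarithm. -/
theorem log_variance_decreasing_in_shift
    {Ω : Type*} [MeasurableSpace Ω] (μ : Measure Ω) [IsProbabilityMeasure μ]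
    (X : Ω → ℝ) (hX : Measurable X)
    (a b : ℝ) (hab : a ≤ b)
    (hbound : ∀ᵐ ω ∂μ, a ≤ X ω ∧ X ω ≤ b)
    (c c' : ℝ) (hcc' : c ≤ c') (hac : 0 < a + c) :
    (∫ ω, Real.log (X ω + c') ^ 2 ∂μ) - (∫ ω, Real.log (X ω + c') ∂μ) ^ 2
      ≤ (∫ ω, Real.log (X ω + c) ^ 2 ∂μ) - (∫ ω, Real.log (X ω + c) ∂μ) ^ 2 := by
  set d := c' - c with hdd
  have hd0 : 0 ≤ d := by linarith
  set Y : Ω → ℝ := fun ω => Real.log (X ω + c) with hYdef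
  set Z : Ω → ℝ := fun ω => Real.log (X ω + c') with hZdef
  have hYm : Measurable Y := Real.measurable_log.comp (hX.add_const c)
  have hZm : Measurable Z := Real.measurable_log.comp (hX.add_const c')
  have hac' : 0 < a + c' := by linarith
  have hbc : 0 < b + c := by linarith
  have hbc' : 0 < b + c' := by linarith
  -- a.e. bounds
  have hYb : ∀ᵐ ω ∂μ, Real.log (a + c) ≤ Y ω ∧ Y ω ≤ Real.log (b + c) := by
    filter_upwards [hbound] with ω hω
    exact ⟨Real.log_le_log hac (by linarith [hω.1]),
           Real.log_le_log (by linarith [hω.1]) (by linarith [hω.2])⟩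
  have hZb : ∀ᵐ ω ∂μ, Real.log (a + c') ≤ Z ω ∧ Z ω ≤ Real.log (b + c') := by
    filter_upwards [hbound] with ω hω
    exact ⟨Real.log_le_log hac' (by linarith [hω.1]),
           Real.log_le_log (by linarith [hω.1]) (by linarith [hω.2])⟩
  have sqb : ∀ (l u : ℝ) (f : Ω → ℝ), (∀ᵐ ω ∂μ, l ≤ f ω ∧ f ω ≤ u) →
      ∀ᵐ ω ∂μ, (0 : ℝ) ≤ f ω ^ 2 ∧ f ω ^ 2 ≤ max (l^2) (u^2) := by
    intro l u f h
    filter_upwards [h] with ω hω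
    refine ⟨sq_nonneg _, ?_⟩
    rcases le_or_gt (f ω) 0 with h0 | h0
    · calc f ω ^ 2 ≤ l ^ 2 := by nlinarith [hω.1]
      _ ≤ _ := le_max_left _ _
    · calc f ω ^ 2 ≤ u ^ 2 := by nlinarith [hω.2]
      _ ≤ _ := le_max_right _ _
  have hYi : Integrable Y μ := integrable_of_ae_bdd μ hYm.aestronglyMeasurable hYb
  have hZi : Integrable Z μ := integrable_of_ae_bdd μ hZm.aestronglyMeasurable hZb
  have hY2i : Integrable (fun ω => Y ω ^ 2) μ :=
    integrable_of_ae_bdd μ ((hYm.pow_const 2).aestronglyMeasurable) (sqb _ _ _ hYb)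
  have hZ2i : Integrable (fun ω => Z ω ^ 2) μ :=
    integrable_of_ae_bdd μ ((hZm.pow_const 2).aestronglyMeasurable) (sqb _ _ _ hZb)
  set t : ℝ := ∫ ω, Y ω ∂μ with ht
  set s : ℝ := Real.log (Real.exp t + d) with hs
  -- pointwise contraction
  have hpt : ∀ᵐ ω ∂μ, (Z ω - s) ^ 2 ≤ (Y ω - t) ^ 2 := by
    filter_upwards [hbound] with ω hω
    have hx : 0 < X ω + c := by linarith [hω.1]
    have key := log_shift_lipschitz d hd0 hx (Real.exp_pos t)
    rw [Real.log_exp] at key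
    have hxd : X ω + c + d = X ω + c' := by rw [hdd]; ring
    rw [hxd] at key
    calc (Z ω - s) ^ 2 = |Z ω - s| ^ 2 := (sq_abs _).symm
      _ ≤ |Y ω - t| ^ 2 := by
          apply pow_le_pow_left₀ (abs_nonneg _) key
      _ = (Y ω - t) ^ 2 := sq_abs _
  -- integrability of squared deviations
  have hYdev : Integrable (fun ω => (Y ω - t) ^ 2) μ := by
    have : (fun ω => (Y ω - t) ^ 2) = fun ω => Y ω ^ 2 - 2 * t * Y ω + t ^ 2 := by
      funext ω; ring
    rw [this]
    exact ((hY2i.sub ((hYi.const_mul (2 * t)))).add (integrable_const _))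
  have hZdev : Integrable (fun ω => (Z ω - s) ^ 2) μ := by
    have : (fun ω => (Z ω - s) ^ 2) = fun ω => Z ω ^ 2 - 2 * s * Z ω + s ^ 2 := by
      funext ω; ring
    rw [this]
    exact ((hZ2i.sub ((hZi.const_mul (2 * s)))).add (integrable_const _))
  have hint : ∫ ω, (Z ω - s) ^ 2 ∂μ ≤ ∫ ω, (Y ω - t) ^ 2 ∂μ :=
    integral_mono_ae hZdev hYdev hpt
  -- expand both integrals
  have expand : ∀ (f : Ω → ℝ) (r : ℝ), Integrable f μ → Integrable (fun ω => f ω ^ 2) μ →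
      ∫ ω, (f ω - r) ^ 2 ∂μ = (∫ ω, f ω ^ 2 ∂μ) - 2 * r * (∫ ω, f ω ∂μ) + r ^ 2 := by
    intro f r hfi hf2i
    have heq : (fun ω => (f ω - r) ^ 2) = fun ω => f ω ^ 2 - 2 * r * f ω + r ^ 2 := by
      funext ω; ring
    have h1 : Integrable (fun ω => f ω ^ 2 - 2 * r * f ω) μ := hf2i.sub (hfi.const_mul (2 * r))
    have h2 : Integrable (fun ω => 2 * r * f ω) μ := hfi.const_mul (2 * r)
    rw [heq, integral_add h1 (integrable_const _), integral_sub hf2i h2,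
        integral_const_mul, integral_const]
    simp
  rw [expand Y t hYi hY2i, expand Z s hZi hZ2i] at hint
  have hIZ : (∫ ω, Z ω ∂μ) ^ 2 ≥ 2 * s * (∫ ω, Z ω ∂μ) - s ^ 2 := by
    nlinarith [sq_nonneg ((∫ ω, Z ω ∂μ) - s)]
  simp only [hYdef, hZdef] at *
  nlinarith [hint, hIZ]
end
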